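/- arXiv:2405.09741 — 7 statements merged into one kernel-verified Lean document; each statement's English description precedes it below -/
import Mathlib

section
/- Let c_1 := P(X_0^* ≥ 2) > 0. For every p ∈ [1 − c_1/4, 1], every integer k ≥ 1, and every integer n ≥ ⌊(log k + log((4+c_1)/c_1))/log m⌋ + 1, one has P( Σ_{i=1}^{m^n − k} X_{0,i} ≤ m^n ) ≤ exp( −(c_1^2/32)·(m^n − k) ), where X_{0,i}, i ≥ 1, are independent copies of X_0. -/
/-!
Chernoff bound with tilt `θ = c₁/4`: for `N = m^n - k` and `t = m^n`,
`P(S_N ≤ t) ≤ e^{θt} E[e^{-θX₀}]^N`. Since `X₀^* ≥ 1`, and `X₀^* ≥ 2` with probability `c₁`, the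
generating function of `X₀` at `x = e^{-θ}` is at most `1 - p + p((1 - c₁)x + c₁x²)`, and third-order
Taylor bounds for `exp` show that this is at most `e^{-(θ(1 + θ) + c₁²/32)}`. The condition on `n`
gives `k(4 + c₁) < c₁ m^n`, i.e. `t ≤ (1 + θ) N`, so the exponents add up to `-(c₁²/32) N`.
-/

noncomputable section

/-- The mass function of `X_0`, namely `(1 - p)·δ_0 + p·ν`. -/
def mix (ν : ℕ → ℝ) (p : ℝ) : ℕ → ℝ :=
  fun k => (1 - p) * (if k = 0 then 1 else 0) + p * ν k

/-- `sumLaw μ N` is the mass function of the sum of `N` independent copies of a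
random variable with mass function `μ` (the `N`-fold convolution of `μ`). -/
def sumLaw (μ : ℕ → ℝ) : ℕ → ℕ → ℝ
  | 0, j => if j = 0 then 1 else 0
  | N + 1, j => ∑ a ∈ Finset.range (j + 1), μ a * sumLaw μ N (j - a)

open Finset Real

section SumLaw

variable {μ : ℕ → ℝ}

theorem sumLaw_nonneg (hμ : ∀ a, 0 ≤ μ a) : ∀ N j, 0 ≤ sumLaw μ N j
  | 0, j => by unfold sumLaw; positivity
  | N + 1, j => sum_nonneg fun a _ => mul_nonneg (hμ a) (sumLaw_nonneg hμ N _)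

theorem sumLaw_succ_mul_pow (x : ℝ) (N j : ℕ) :
    sumLaw μ (N + 1) j * x ^ j =
      ∑ a ∈ range (j + 1), μ a * x ^ a * (sumLaw μ N (j - a) * x ^ (j - a)) := by
  rw [sumLaw, sum_mul]
  refine sum_congr rfl fun a ha => ?_
  rw [← Nat.add_sub_cancel' (Nat.lt_succ_iff.mp (mem_range.mp ha)), pow_add]
  simp only [Nat.add_sub_cancel_left]
  ring

theorem hasSum_sumLaw_mul_pow {x : ℝ} (hμ : Summable fun a => μ a * x ^ a) (N : ℕ) :
    HasSum (fun j => sumLaw μ N j * x ^ j) ((∑' a, μ a * x ^ a) ^ N) := by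
  induction N with
  | zero =>
    rw [pow_zero]
    convert hasSum_ite_eq 0 (1 : ℝ) using 2 with j
    by_cases hj : j = 0 <;> simp [sumLaw, hj]
  | succ N ih =>
    have h := hasSum_sum_range_mul_of_summable_norm (f := fun a => μ a * x ^ a)
      (g := fun j => sumLaw μ N j * x ^ j) (by simpa only [Real.norm_eq_abs] using hμ.abs)
      (by simpa only [Real.norm_eq_abs] using ih.summable.abs)
    rw [ih.tsum_eq, ← pow_succ'] at h
    simpa only [← sumLaw_succ_mul_pow] using h

end SumLaw

theorem sum_range_mul_pow_le_of_hasSum {f : ℕ → ℝ} (hf : ∀ j, 0 ≤ f j) {x s : ℝ} (hx0 : 0 ≤ x)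
    (hx1 : x ≤ 1) (h : HasSum (fun j => f j * x ^ j) s) (t : ℕ) :
    (∑ j ∈ range (t + 1), f j) * x ^ t ≤ s :=
  calc (∑ j ∈ range (t + 1), f j) * x ^ t
      ≤ ∑ j ∈ range (t + 1), f j * x ^ j := by
        rw [sum_mul]
        exact sum_le_sum fun j hj => mul_le_mul_of_nonneg_left
          (pow_le_pow_of_le_one hx0 hx1 (Nat.lt_succ_iff.mp (mem_range.mp hj))) (hf j)
    _ ≤ s := sum_le_hasSum _ (fun j _ => mul_nonneg (hf j) (pow_nonneg hx0 j)) h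

theorem sum_range_sumLaw_le_mul_exp {μ : ℕ → ℝ} (hμ : ∀ a, 0 ≤ μ a) {θ M : ℝ} (hθ : 0 ≤ θ)
    (h : HasSum (fun a => μ a * exp (-θ) ^ a) M) (N t : ℕ) :
    ∑ j ∈ range (t + 1), sumLaw μ N j ≤ M ^ N * exp (θ * t) := by
  have hx1 : exp (-θ) ≤ 1 := exp_le_one_iff.2 (neg_nonpos.2 hθ)
  have := sum_range_mul_pow_le_of_hasSum (sumLaw_nonneg hμ N) (exp_pos _).le hx1
    (hasSum_sumLaw_mul_pow h.summable N) t
  rwa [h.tsum_eq, ← exp_nat_mul, mul_neg, exp_neg, ← div_eq_mul_inv, div_le_iff₀ (exp_pos _),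
    mul_comm (t : ℝ)] at this

theorem mix_nonneg {ν : ℕ → ℝ} (hν : ∀ a, 0 ≤ ν a) {p : ℝ} (hp0 : 0 ≤ p) (hp1 : p ≤ 1) (a : ℕ) :
    0 ≤ mix ν p a := by
  unfold mix
  have : 0 ≤ 1 - p := sub_nonneg.2 hp1
  have := hν a
  positivity

theorem HasSum.mix_mul_pow {ν : ℕ → ℝ} {x s : ℝ} (h : HasSum (fun a => ν a * x ^ a) s) (p : ℝ) :
    HasSum (fun a => mix ν p a * x ^ a) (1 - p + p * s) := by
  have hsplit : (fun a => mix ν p a * x ^ a) =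
      fun a => (1 - p) * (if a = 0 then 1 else 0) + p * (ν a * x ^ a) := by
    ext a
    by_cases ha : a = 0 <;> simp [mix, ha]
    ring
  rw [hsplit]
  simpa using ((hasSum_ite_eq (0 : ℕ) (1 : ℝ)).mul_left (1 - p)).add (h.mul_left p)

section GeneratingFunction

variable {ν : ℕ → ℝ} {x : ℝ}

theorem Summable.mul_pow_of_nonneg_of_le_one (hν : Summable ν) (hνnn : ∀ a, 0 ≤ ν a)
    (hx0 : 0 ≤ x) (hx1 : x ≤ 1) : Summable fun a => ν a * x ^ a :=
  hν.of_nonneg_of_le (fun a => mul_nonneg (hνnn a) (pow_nonneg hx0 a))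
    (fun a => mul_le_of_le_one_right (hνnn a) (pow_le_one₀ hx0 hx1))

theorem apply_one_eq_one_sub_tsum (hν0 : ν 0 = 0) (hν : Summable ν) (hνsum : ∑' a, ν a = 1) :
    ν 1 = 1 - ∑' j, ν (j + 2) := by
  have := hν.sum_add_tsum_nat_add 2
  simp only [sum_range_succ, sum_range_zero, hν0, hνsum] at this
  linarith

theorem tsum_mul_pow_le (hν0 : ν 0 = 0) (hνnn : ∀ a, 0 ≤ ν a) (hν : Summable ν)
    (hx0 : 0 ≤ x) (hx1 : x ≤ 1) :
    ∑' a, ν a * x ^ a ≤ ν 1 * x + (∑' j, ν (j + 2)) * x ^ 2 := by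
  have hνx := hν.mul_pow_of_nonneg_of_le_one hνnn hx0 hx1
  have htail : ∑' j, ν (j + 2) * x ^ (j + 2) ≤ ∑' j, ν (j + 2) * x ^ 2 :=
    ((summable_nat_add_iff 2).2 hνx).tsum_le_tsum
      (fun j => mul_le_mul_of_nonneg_left (pow_le_pow_of_le_one hx0 hx1 (by omega)) (hνnn _))
      (((summable_nat_add_iff 2).2 hν).mul_right _)
  rw [← hνx.sum_add_tsum_nat_add 2, ← tsum_mul_right]
  simpa [sum_range_succ, hν0] using htail

end GeneratingFunction

theorem exp_neg_le_one_sub_add_sq_div_two {y : ℝ} (h0 : 0 ≤ y) (h1 : y ≤ 1) :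
    exp (-y) ≤ 1 - y + y ^ 2 / 2 := by
  have h := Real.exp_bound (x := -y) (by rwa [abs_neg, abs_of_nonneg h0]) (n := 4) (by norm_num)
  simp only [sum_range_succ, sum_range_zero, abs_neg, abs_of_nonneg h0, Nat.factorial] at h
  norm_num at h
  nlinarith [abs_le.1 h, pow_le_pow_of_le_one h0 h1 (show 3 ≤ 4 by norm_num)]

theorem one_sub_add_sq_div_two_sub_cube_div_six_le_exp_neg {y : ℝ} (h0 : 0 ≤ y) (h1 : y ≤ 1) :
    1 - y + y ^ 2 / 2 - y ^ 3 / 6 ≤ exp (-y) := by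
  have h := Real.exp_bound (x := -y) (by rwa [abs_neg, abs_of_nonneg h0]) (n := 5) (by norm_num)
  simp only [sum_range_succ, sum_range_zero, abs_neg, abs_of_nonneg h0, Nat.factorial] at h
  norm_num at h
  nlinarith [abs_le.1 h, pow_le_pow_of_le_one h0 h1 (show 4 ≤ 5 by norm_num)]

-- At `c = 1` the two sides differ by less than `10⁻³`; lower-order Taylor bounds do not suffice.
theorem chernoff_polynomial_bound {c A D : ℝ} (hc : c ≤ 1) (hA : A = 1 - c / 4 + c ^ 2 / 32)
    (hD : D = c / 4 + 3 * c ^ 2 / 32) :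
    D - D ^ 2 / 2 + D ^ 3 / 6 ≤ (1 - c / 4) * (1 - (1 - c) * A - c * A ^ 2) := by
  subst hA hD
  nlinarith [mul_nonneg (sq_nonneg c) (sub_nonneg.2 hc),
    mul_nonneg (sq_nonneg c) (sq_nonneg (1 - c)),
    mul_nonneg (mul_nonneg (sq_nonneg c) (sub_nonneg.2 hc)) (sq_nonneg (1 - c)),
    mul_nonneg (sq_nonneg c) (sq_nonneg ((1 - c) ^ 2)), sq_nonneg c]

theorem one_sub_add_mul_exp_neg_le {c p : ℝ} (hc0 : 0 < c) (hc1 : c ≤ 1) (hp : 1 - c / 4 ≤ p) :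
    1 - p + p * ((1 - c) * exp (-(c / 4)) + c * exp (-(c / 4)) ^ 2) ≤
      exp (-(c / 4 + 3 * c ^ 2 / 32)) := by
  set a := exp (-(c / 4))
  set A := 1 - c / 4 + c ^ 2 / 32 with hA
  set D := c / 4 + 3 * c ^ 2 / 32 with hD
  have haA : a ≤ A := by
    have := exp_neg_le_one_sub_add_sq_div_two (y := c / 4) (by positivity) (by linarith)
    linarith
  have hgA : 0 ≤ 1 - (1 - c) * A - c * A ^ 2 := by
    rw [hA]
    nlinarith [sq_nonneg c, mul_nonneg (sq_nonneg c) hc0.le,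
      mul_nonneg (mul_nonneg (sq_nonneg c) hc0.le) hc0.le, mul_nonneg (sq_nonneg c) (sub_nonneg.2 hc1)]
  have hga : 1 - (1 - c) * A - c * A ^ 2 ≤ 1 - (1 - c) * a - c * a ^ 2 := by
    have ha0 : 0 ≤ a := (exp_pos _).le
    nlinarith [mul_nonneg (sub_nonneg.2 hc1) (sub_nonneg.2 haA),
      mul_nonneg (mul_nonneg hc0.le (sub_nonneg.2 haA)) (by linarith : 0 ≤ a + A)]
  calc 1 - p + p * ((1 - c) * a + c * a ^ 2) = 1 - p * (1 - (1 - c) * a - c * a ^ 2) := by ring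
    _ ≤ 1 - (1 - c / 4) * (1 - (1 - c) * A - c * A ^ 2) := by
        gcongr 1 - ?_
        exact mul_le_mul hp hga hgA (by linarith)
    _ ≤ 1 - D + D ^ 2 / 2 - D ^ 3 / 6 := by linarith [chernoff_polynomial_bound hc1 hA hD]
    _ ≤ exp (-D) :=
        one_sub_add_sq_div_two_sub_cube_div_six_le_exp_neg (by positivity) (by rw [hD]; nlinarith)

theorem one_sub_add_mul_tsum_le_exp_neg {ν : ℕ → ℝ} (hν0 : ν 0 = 0) (hνnn : ∀ a, 0 ≤ ν a)
    (hν : Summable ν) (hνsum : ∑' a, ν a = 1) {c p : ℝ} (hc : c = ∑' j, ν (j + 2)) (hc0 : 0 < c)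
    (hp : 1 - c / 4 ≤ p) :
    1 - p + p * ∑' a, ν a * exp (-(c / 4)) ^ a ≤ exp (-(c / 4 + 3 * c ^ 2 / 32)) := by
  have hν1 : ν 1 = 1 - c := hc ▸ apply_one_eq_one_sub_tsum hν0 hν hνsum
  have hc1 : c ≤ 1 := by linarith [hνnn 1]
  have hx0 : 0 ≤ exp (-(c / 4)) := (exp_pos _).le
  have hx1 : exp (-(c / 4)) ≤ 1 := exp_le_one_iff.2 (by linarith)
  have h := tsum_mul_pow_le hν0 hνnn hν hx0 hx1
  rw [hν1, ← hc] at h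
  calc 1 - p + p * ∑' a, ν a * exp (-(c / 4)) ^ a
      ≤ 1 - p + p * ((1 - c) * exp (-(c / 4)) + c * exp (-(c / 4)) ^ 2) := by
        gcongr
        linarith
    _ ≤ _ := one_sub_add_mul_exp_neg_le hc0 hc1 hp

theorem lt_pow_of_floor_log_div_log_add_one_le {b y : ℝ} (hb : 1 < b) (hy : 0 < y) {n : ℕ}
    (h : ⌊log y / log b⌋ + 1 ≤ (n : ℤ)) : y < b ^ n := by
  have hlt : log y / log b < n := by
    have : ((⌊log y / log b⌋ + 1 : ℤ) : ℝ) ≤ n := by exact_mod_cast h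
    push_cast at this
    linarith [Int.lt_floor_add_one (log y / log b)]
  rw [div_lt_iff₀ (log_pos hb), ← log_pow] at hlt
  exact (log_lt_log_iff hy (by positivity)).1 hlt

theorem cast_pow_le_mul_cast_sub {m k n : ℕ} {c : ℝ} (hm : 2 ≤ m) (hk : 1 ≤ k) (hc : 0 < c)
    (hn : ⌊(log k + log ((4 + c) / c)) / log m⌋ + 1 ≤ (n : ℤ)) :
    ((m ^ n : ℕ) : ℝ) ≤ (1 + c / 4) * ((m ^ n - k : ℕ) : ℝ) := by
  have hk_lt : (k : ℝ) * (4 + c) < c * (m : ℝ) ^ n := by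
    have : (k : ℝ) * ((4 + c) / c) < (m : ℝ) ^ n := by
      refine lt_pow_of_floor_log_div_log_add_one_le (by exact_mod_cast hm) (by positivity) ?_
      rwa [log_mul (by positivity) (by positivity)]
    rwa [← mul_div_assoc, div_lt_iff₀ hc, mul_comm _ c] at this
  have hkm : k ≤ m ^ n := by
    have : (k : ℝ) ≤ (m : ℝ) ^ n := by nlinarith [(k.cast_nonneg : (0 : ℝ) ≤ k)]
    exact_mod_cast this
  rw [Nat.cast_sub hkm]
  push_cast
  linarith

/-- With `c_1 = P(X_0^* ≥ 2) > 0`, for every `p ∈ [1 - c_1/4, 1]`,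
every `k ≥ 1` and every `n ≥ ⌊(log k + log((4+c_1)/c_1))/log m⌋ + 1`,
`P(Σ_{i=1}^{m^n - k} X_{0,i} ≤ m^n) ≤ exp(-(c_1²/32)(m^n - k))`. -/
theorem hoeffding_bound_for_X0_sums
    (m : ℕ) (hm : 2 ≤ m) (ν : ℕ → ℝ)
    (hν0 : ν 0 = 0) (hνnn : ∀ k, 0 ≤ ν k) (hνsum : ∑' k, ν k = 1)
    (c1 : ℝ) (hc1 : c1 = ∑' j : ℕ, ν (j + 2)) (hc1pos : 0 < c1)
    (p : ℝ) (hp : p ∈ Set.Icc (1 - c1 / 4) 1)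
    (k : ℕ) (hk : 1 ≤ k)
    (n : ℕ)
    (hn : ⌊(Real.log k + Real.log ((4 + c1) / c1)) / Real.log m⌋ + 1 ≤ (n : ℤ)) :
    ∑ j ∈ Finset.range (m ^ n + 1), sumLaw (mix ν p) (m ^ n - k) j ≤
      Real.exp (-(c1 ^ 2 / 32) * ((m ^ n - k : ℕ) : ℝ)) := by
  obtain ⟨hpl, hpu⟩ := hp
  have hν : Summable ν := by
    by_contra h
    simp [tsum_eq_zero_of_not_summable h] at hνsum
  have hc1le : c1 ≤ 1 := by linarith [hνnn 1, apply_one_eq_one_sub_tsum hν0 hν hνsum]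
  have hμ := mix_nonneg hνnn (by linarith) hpu
  have hmgf := (hν.mul_pow_of_nonneg_of_le_one hνnn (exp_pos (-(c1 / 4))).le
    (exp_le_one_iff.2 (by linarith))).hasSum.mix_mul_pow p
  have hmgf0 := hmgf.nonneg fun a => mul_nonneg (hμ a) (pow_nonneg (exp_pos _).le a)
  have hmgf_le := one_sub_add_mul_tsum_le_exp_neg hν0 hνnn hν hνsum hc1 hc1pos hpl
  have hsize := cast_pow_le_mul_cast_sub hm hk hc1pos hn
  calc ∑ j ∈ range (m ^ n + 1), sumLaw (mix ν p) (m ^ n - k) j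
      ≤ (1 - p + p * ∑' a, ν a * exp (-(c1 / 4)) ^ a) ^ (m ^ n - k) *
          exp (c1 / 4 * ((m ^ n : ℕ) : ℝ)) := sum_range_sumLaw_le_mul_exp hμ (by positivity) hmgf _ _
    _ ≤ exp (-(c1 / 4 + 3 * c1 ^ 2 / 32)) ^ (m ^ n - k) *
          exp (c1 / 4 * ((1 + c1 / 4) * ((m ^ n - k : ℕ) : ℝ))) := by gcongr
    _ = exp (-(c1 ^ 2 / 32) * ((m ^ n - k : ℕ) : ℝ)) := by
        rw [← exp_nat_mul, ← exp_add]
        ring_nf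
end
end

section
/- Fix δ ∈ (0, 1/2) and assume c_2 := E(m^{(1−δ)X_0^*}) < ∞. Then for every p ∈ (0,1), every integer k ≥ 1 and every integer n ≥ 1, |d^k/dp^k P(X_n = 0)| ≤ 2^k · k! · m^{kn} · P(X_n = 0)/(1−p)^k. -/
/-!
Write the law of `X_n` as polynomials in two variables standing for `p` and `1 - p`; their
coefficients are nonnegative. Then `d/dp` acts as `∂₀ - ∂₁`, and at nonnegative points
`|(∂₀ - ∂₁)ᵏ F| ≤ (∂₀ + ∂₁)ᵏ F` for such `F`, so only the positive operator `D = ∂₀ + ∂₁` has to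
be controlled. Induction on `n` gives `Dᵏ F ≤ k! (2 mⁿ / (1 - p))ᵏ F` for the distribution
functions `F = P(X_n ≤ j)`: as `P(X_{n+1} ≤ j) = P(Y_1 + ⋯ + Y_m ≤ j + 1)` for independent copies
`Y_i` of `X_n`, it suffices that such a bound for one summand passes to a sum of `t` copies with
the constant multiplied by `t`, which follows from Leibniz' rule and Abel summation.
-/

noncomputable section

/-- One step of the Derrida–Retaux recursion on probability mass functions on ℕ. -/
def drStep (m : ℕ) (μ : ℕ → ℝ) : ℕ → ℝ :=
  fun j => ∑' x : Fin m → ℕ, if (∑ i, x i) - 1 = j then ∏ i, μ (x i) else 0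

/-- The mass function of `X_n`. -/
def drLaw (m : ℕ) (ν : ℕ → ℝ) (p : ℝ) (n : ℕ) : ℕ → ℝ :=
  (drStep m)^[n] (mix ν p)

open Finset MvPolynomial
open scoped Nat

theorem sum_range_mul_le_sum_range_mul_of_antitone {a b w : ℕ → ℝ}
    (hab : ∀ N, ∑ i ∈ range N, a i ≤ ∑ i ∈ range N, b i) (hw : Antitone w) (hw0 : ∀ i, 0 ≤ w i)
    (n : ℕ) : ∑ i ∈ range n, a i * w i ≤ ∑ i ∈ range n, b i * w i := by
  have hG : ∀ N, 0 ≤ ∑ i ∈ range N, (b i - a i) := fun N => by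
    rw [sum_sub_distrib]; linarith [hab N]
  have hparts := sum_range_by_parts w (fun i => b i - a i) n
  simp only [smul_eq_mul] at hparts
  have hlast : 0 ≤ w (n - 1) * ∑ i ∈ range n, (b i - a i) := mul_nonneg (hw0 _) (hG n)
  have hsteps : ∑ i ∈ range (n - 1), (w (i + 1) - w i) * ∑ j ∈ range (i + 1), (b j - a j) ≤ 0 :=
    sum_nonpos fun i _ => mul_nonpos_of_nonpos_of_nonneg (sub_nonpos.2 (hw i.le_succ)) (hG _)
  have hsplit : ∑ i ∈ range n, w i * (b i - a i) =
      ∑ i ∈ range n, b i * w i - ∑ i ∈ range n, a i * w i := by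
    rw [← sum_sub_distrib]; exact sum_congr rfl fun i _ => by ring
  linarith

theorem sum_antidiagonal_choose_mul_factorial_le {K t : ℝ} (hK : 0 ≤ K) (ht : 0 ≤ t) (k : ℕ) :
    ∑ ij ∈ antidiagonal k, (k.choose ij.1 : ℝ) * (ij.1 ! * K ^ ij.1) * (ij.2 ! * (K * t) ^ ij.2)
      ≤ k ! * (K * (t + 1)) ^ k := by
  rw [mul_pow, add_comm t, (Commute.one_left t).add_pow', mul_sum, mul_sum]
  refine sum_le_sum fun ij hij => ?_
  obtain ⟨i, j⟩ := ij
  rw [HasAntidiagonal.mem_antidiagonal] at hij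
  subst hij
  dsimp only
  have hfac : ((i + j).choose i : ℝ) * i ! * j ! = (i + j)! := by
    rw [Nat.choose_symm_add]; exact_mod_cast Nat.add_choose_mul_factorial_mul_factorial i j
  have hchoose : (1 : ℝ) ≤ (i + j).choose i := by exact_mod_cast Nat.choose_pos (by omega)
  calc ((i + j).choose i : ℝ) * (i ! * K ^ i) * (j ! * (K * t) ^ j)
      = (i + j)! * K ^ (i + j) * t ^ j := by rw [← hfac, mul_pow, pow_add]; ring
    _ ≤ (i + j)! * (K ^ (i + j) * (i + j).choose i • (1 ^ i * t ^ j)) := by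
      rw [nsmul_eq_mul, one_pow, one_mul, ← mul_assoc]
      gcongr
      exact le_mul_of_one_le_left (by positivity) hchoose

namespace Derivation

variable {R A : Type*} [CommSemiring R] [CommSemiring A] [Algebra R A] (D : Derivation R A A)

theorem iterate_map_sum {ι : Type*} (s : Finset ι) (g : ι → A) (k : ℕ) :
    (⇑D)^[k] (∑ i ∈ s, g i) = ∑ i ∈ s, (⇑D)^[k] (g i) := by
  induction k with
  | zero => rfl
  | succ k ih => simp only [Function.iterate_succ_apply', ih, map_sum]

theorem iterate_leibniz (a b : A) (n : ℕ) :
    (⇑D)^[n] (a * b) =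
      ∑ ij ∈ antidiagonal n, n.choose ij.1 • ((⇑D)^[ij.1] a * (⇑D)^[ij.2] b) := by
  induction n with
  | zero => simp
  | succ n ih =>
    rw [Function.iterate_succ_apply', ih, map_sum,
      sum_antidiagonal_choose_succ_nsmul (fun i j => (⇑D)^[i] a * (⇑D)^[j] b), ← sum_add_distrib]
    refine sum_congr rfl fun ij hij => ?_
    rw [HasAntidiagonal.mem_antidiagonal] at hij
    rw [map_nsmul, D.leibniz, ← Nat.choose_symm_of_eq_add hij.symm, Function.iterate_succ_apply',
      Function.iterate_succ_apply', smul_eq_mul, smul_eq_mul, ← smul_add]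
    ring

end Derivation

def boundedTuples (t s : ℕ) : Finset (Fin t → ℕ) :=
  {x ∈ Fintype.piFinset fun _ => range (s + 1) | ∑ i, x i ≤ s}

theorem mem_boundedTuples {t s : ℕ} {x : Fin t → ℕ} : x ∈ boundedTuples t s ↔ ∑ i, x i ≤ s := by
  simp only [boundedTuples, mem_filter, Fintype.mem_piFinset, mem_range, and_iff_right_iff_imp]
  exact fun h i =>
    Nat.lt_succ_of_le ((single_le_sum (fun j _ => Nat.zero_le (x j)) (mem_univ i)).trans h)

section Convolution

variable {A : Type*}

def convPowCdf [CommSemiring A] (f : ℕ → A) (t s : ℕ) : A :=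
  ∑ x ∈ boundedTuples t s, ∏ i, f (x i)

def finDrStep [CommSemiring A] (m : ℕ) (μ : ℕ → A) (j : ℕ) : A :=
  ∑ x ∈ boundedTuples m (j + 1) with (∑ i, x i) - 1 = j, ∏ i, μ (x i)

theorem convPowCdf_zero [CommSemiring A] (f : ℕ → A) (s : ℕ) : convPowCdf f 0 s = 1 := by
  simp [convPowCdf, boundedTuples]

theorem convPowCdf_succ [CommSemiring A] (f : ℕ → A) (t s : ℕ) :
    convPowCdf f (t + 1) s = ∑ v ∈ range (s + 1), f v * convPowCdf f t (s - v) := by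
  simp only [convPowCdf, mul_sum]
  rw [sum_sigma']
  refine sum_nbij' (fun x => ⟨x 0, Fin.tail x⟩) (fun p => Fin.cons p.1 p.2) ?_ ?_ ?_ ?_ ?_
  · intro x hx
    simp only [mem_sigma, mem_range, mem_boundedTuples, Fin.tail] at hx ⊢
    rw [Fin.sum_univ_succ] at hx
    omega
  · rintro ⟨v, y⟩ hy
    simp only [mem_sigma, mem_range, mem_boundedTuples] at hy ⊢
    rw [Fin.sum_univ_succ]
    simp only [Fin.cons_zero, Fin.cons_succ]
    omega
  · intro x _
    exact Fin.cons_self_tail x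
  · rintro ⟨v, y⟩ _
    simp
  · intro x _
    rw [Fin.prod_univ_succ]
    rfl

theorem convPowCdf_succ_sub [CommRing A] (f : ℕ → A) (t s : ℕ) :
    convPowCdf f t (s + 1) - convPowCdf f t s =
      ∑ x ∈ boundedTuples t (s + 1) \ boundedTuples t s, ∏ i, f (x i) :=
  (sum_sdiff_eq_sub fun _ hx => mem_boundedTuples.2 ((mem_boundedTuples.1 hx).trans s.le_succ)).symm

theorem sum_finDrStep [CommSemiring A] (m : ℕ) (f : ℕ → A) (j : ℕ) :
    ∑ j' ∈ range (j + 1), finDrStep m f j' = convPowCdf f m (j + 1) := by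
  have hfiber : ∀ j' ∈ range (j + 1), finDrStep m f j' =
      ∑ x ∈ boundedTuples m (j + 1) with (∑ i, x i) - 1 = j', ∏ i, f (x i) := by
    intro j' hj'
    rw [mem_range] at hj'
    unfold finDrStep
    congr 1
    ext x
    simp only [mem_filter, mem_boundedTuples]
    omega
  rw [sum_congr rfl hfiber, convPowCdf, sum_fiberwise_of_maps_to]
  intro x hx
  rw [mem_range]
  rw [mem_boundedTuples] at hx
  omega

theorem map_finDrStep {B : Type*} [CommSemiring A] [CommSemiring B] (ψ : A →+* B) (m : ℕ)
    (μ : ℕ → A) (j : ℕ) : ψ (finDrStep m μ j) = finDrStep m (ψ ∘ μ) j := by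
  simp [finDrStep, map_sum, map_prod]

theorem finDrStep_mem [CommSemiring A] {S : Subsemiring A} {μ : ℕ → A} (hμ : ∀ j, μ j ∈ S)
    (m j : ℕ) : finDrStep m μ j ∈ S :=
  sum_mem fun _ _ => prod_mem fun _ _ => hμ _

theorem convPowCdf_mem [CommSemiring A] {S : Subsemiring A} {f : ℕ → A} (hf : ∀ v, f v ∈ S)
    (t s : ℕ) : convPowCdf f t s ∈ S :=
  sum_mem fun _ _ => prod_mem fun _ _ => hf _

end Convolution

theorem drStep_eq_finDrStep (m : ℕ) (μ : ℕ → ℝ) : drStep m μ = finDrStep m μ := by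
  funext j
  rw [drStep, finDrStep, sum_filter]
  refine tsum_eq_sum fun x hx => if_neg fun h => hx (mem_boundedTuples.2 ?_)
  omega

section PositiveCone

variable {A : Type*}

theorem abs_iterate_sub_le [AddCommGroup A] {S : AddSubmonoid A} {f g : A →+ A}
    (hf : Set.MapsTo f S S) (hg : Set.MapsTo g S S) {ψ : A →+ ℝ} (hψ : ∀ a ∈ S, 0 ≤ ψ a)
    (k : ℕ) {a : A} (ha : a ∈ S) :
    |ψ ((⇑(f - g))^[k] a)| ≤ ψ ((⇑(f + g))^[k] a) := by
  -- `(f + g) u ± (f - g) w = f (u ± w) + g (u ∓ w)`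
  have key : ∀ k, (⇑(f + g))^[k] a + (⇑(f - g))^[k] a ∈ S ∧
      (⇑(f + g))^[k] a - (⇑(f - g))^[k] a ∈ S := by
    intro k
    induction k with
    | zero =>
      simp only [Function.iterate_zero, id_eq, sub_self]
      exact ⟨add_mem ha ha, zero_mem S⟩
    | succ k ih =>
      simp only [Function.iterate_succ_apply', AddMonoidHom.add_apply, AddMonoidHom.sub_apply]
      constructor
      · convert add_mem (hf ih.1) (hg ih.2) using 1
        simp only [map_add, map_sub]; abel
      · convert add_mem (hf ih.2) (hg ih.1) using 1
        simp only [map_add, map_sub]; abel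
  have hsum := hψ _ (key k).1
  have hdiff := hψ _ (key k).2
  rw [map_add] at hsum
  rw [map_sub] at hdiff
  exact abs_le.2 ⟨by linarith, by linarith⟩

variable [CommRing A] [Algebra ℝ A] {S : Subsemiring A} {D : Derivation ℝ A A} {ψ : A →+* ℝ}

theorem sum_iterate_mul_le_of_antitone {f : ℕ → A} {K : ℝ}
    (hcdf : ∀ V k, ψ ((⇑D)^[k] (∑ v ∈ range (V + 1), f v)) ≤
      k ! * K ^ k * ψ (∑ v ∈ range (V + 1), f v))
    {w : ℕ → ℝ} (hw : Antitone w) (hw0 : ∀ v, 0 ≤ w v) (i N : ℕ) :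
    ∑ v ∈ range N, ψ ((⇑D)^[i] (f v)) * w v ≤ i ! * K ^ i * ∑ v ∈ range N, ψ (f v) * w v := by
  simp only [mul_sum, ← mul_assoc]
  refine sum_range_mul_le_sum_range_mul_of_antitone (fun N => ?_) hw hw0 N
  rcases N with _ | V
  · simp
  · simpa [← mul_sum, map_sum, D.iterate_map_sum] using hcdf V i

theorem monotone_iterate_convPowCdf (hD : Set.MapsTo D S S) (hψ : ∀ a ∈ S, 0 ≤ ψ a)
    {f : ℕ → A} (hf : ∀ v, f v ∈ S) (t i : ℕ) :
    Monotone fun u => ψ ((⇑D)^[i] (convPowCdf f t u)) := by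
  refine monotone_nat_of_le_succ fun u => ?_
  have hsub : convPowCdf f t (u + 1) - convPowCdf f t u ∈ S := by
    rw [convPowCdf_succ_sub]
    exact sum_mem fun _ _ => prod_mem fun _ _ => hf _
  have := hψ _ (hD.iterate i hsub)
  rwa [iterate_map_sub, map_sub, sub_nonneg] at this

theorem iterate_convPowCdf_succ_le (hD : Set.MapsTo D S S) (hψ : ∀ a ∈ S, 0 ≤ ψ a)
    {f : ℕ → A} (hf : ∀ v, f v ∈ S) {K : ℝ} (hK : 0 ≤ K)
    (hcdf : ∀ V k, ψ ((⇑D)^[k] (∑ v ∈ range (V + 1), f v)) ≤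
      k ! * K ^ k * ψ (∑ v ∈ range (V + 1), f v)) {t : ℕ}
    (ht : ∀ s k, ψ ((⇑D)^[k] (convPowCdf f t s)) ≤ k ! * (K * t) ^ k * ψ (convPowCdf f t s))
    (s k : ℕ) :
    ψ ((⇑D)^[k] (convPowCdf f (t + 1) s)) ≤
      k ! * (K * (t + 1 : ℕ)) ^ k * ψ (convPowCdf f (t + 1) s) := by
  set B : ℕ → ℕ → ℝ := fun i u => ψ ((⇑D)^[i] (convPowCdf f t u))
  have hinner : ∀ i j, ∑ v ∈ range (s + 1), ψ ((⇑D)^[i] (f v)) * B j (s - v) ≤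
      i ! * K ^ i * (j ! * (K * t) ^ j * ψ (convPowCdf f (t + 1) s)) := by
    intro i j
    have hw : Antitone fun v => B j (s - v) := fun u v huv =>
      monotone_iterate_convPowCdf hD hψ hf t j (Nat.sub_le_sub_left huv s)
    calc ∑ v ∈ range (s + 1), ψ ((⇑D)^[i] (f v)) * B j (s - v)
        ≤ i ! * K ^ i * ∑ v ∈ range (s + 1), ψ (f v) * B j (s - v) :=
          sum_iterate_mul_le_of_antitone hcdf hw
            (fun v => hψ _ (hD.iterate j (convPowCdf_mem hf t _))) i _
      _ ≤ i ! * K ^ i * ∑ v ∈ range (s + 1),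
            ψ (f v) * (j ! * (K * t) ^ j * ψ (convPowCdf f t (s - v))) := by
          gcongr with v
          · exact hψ _ (hf v)
          · exact ht _ _
      _ = _ := by
          rw [convPowCdf_succ, map_sum, mul_sum, mul_sum]
          simp only [map_mul, mul_sum]
          exact sum_congr rfl fun v _ => by ring
  calc ψ ((⇑D)^[k] (convPowCdf f (t + 1) s))
      = ∑ ij ∈ antidiagonal k, (k.choose ij.1 : ℝ) *
          ∑ v ∈ range (s + 1), ψ ((⇑D)^[ij.1] (f v)) * B ij.2 (s - v) := by
        simp only [convPowCdf_succ, D.iterate_map_sum, D.iterate_leibniz, map_sum, map_mul,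
          nsmul_eq_mul, map_natCast, mul_sum]
        exact sum_comm
    _ ≤ ∑ ij ∈ antidiagonal k, (k.choose ij.1 : ℝ) * (ij.1 ! * K ^ ij.1) *
          (ij.2 ! * (K * t) ^ ij.2) * ψ (convPowCdf f (t + 1) s) := by
        refine sum_le_sum fun ij _ => ?_
        calc (k.choose ij.1 : ℝ) * ∑ v ∈ range (s + 1), ψ ((⇑D)^[ij.1] (f v)) * B ij.2 (s - v)
            ≤ k.choose ij.1 * (ij.1 ! * K ^ ij.1 *
                (ij.2 ! * (K * t) ^ ij.2 * ψ (convPowCdf f (t + 1) s))) :=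
              mul_le_mul_of_nonneg_left (hinner _ _) (by positivity)
          _ = _ := by ring
    _ ≤ k ! * (K * (t + 1 : ℕ)) ^ k * ψ (convPowCdf f (t + 1) s) := by
        rw [← sum_mul]
        gcongr
        · exact hψ _ (convPowCdf_mem hf _ _)
        · push_cast
          exact sum_antidiagonal_choose_mul_factorial_le hK t.cast_nonneg k

theorem iterate_convPowCdf_le (hD : Set.MapsTo D S S) (hψ : ∀ a ∈ S, 0 ≤ ψ a)
    {f : ℕ → A} (hf : ∀ v, f v ∈ S) {K : ℝ} (hK : 0 ≤ K)
    (hcdf : ∀ V k, ψ ((⇑D)^[k] (∑ v ∈ range (V + 1), f v)) ≤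
      k ! * K ^ k * ψ (∑ v ∈ range (V + 1), f v)) (t s k : ℕ) :
    ψ ((⇑D)^[k] (convPowCdf f t s)) ≤ k ! * (K * t) ^ k * ψ (convPowCdf f t s) := by
  induction t generalizing s k with
  | zero =>
    rcases k with _ | k
    · simp
    · simp [convPowCdf_zero, Function.iterate_succ_apply, iterate_map_zero]
  | succ t ih => exact iterate_convPowCdf_succ_le hD hψ hf hK hcdf ih s k

end PositiveCone

def nonnegCoeffs (σ : Type*) : Subsemiring (MvPolynomial σ ℝ) where
  carrier := {P | ∀ d, 0 ≤ P.coeff d}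
  mul_mem' {P Q} hP hQ d := by
    classical
    rw [coeff_mul]
    exact sum_nonneg fun x _ => mul_nonneg (hP _) (hQ _)
  one_mem' d := by
    classical
    rw [coeff_one]
    split_ifs <;> norm_num
  add_mem' hP hQ d := by
    rw [coeff_add]
    exact add_nonneg (hP d) (hQ d)
  zero_mem' d := by simp

section NonnegCoeffs

variable {σ : Type*}

theorem C_mem_nonnegCoeffs {r : ℝ} (hr : 0 ≤ r) : C r ∈ nonnegCoeffs σ := fun d => by
  classical
  rw [coeff_C]
  split_ifs <;> simp [hr]

theorem X_mem_nonnegCoeffs (i : σ) : X i ∈ nonnegCoeffs σ := fun d => by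
  classical
  rw [coeff_X]
  split_ifs <;> norm_num

theorem mapsTo_pderiv_nonnegCoeffs (i : σ) :
    Set.MapsTo (pderiv i) (nonnegCoeffs σ : Set (MvPolynomial σ ℝ)) (nonnegCoeffs σ) := by
  intro P hP d
  rw [coeff_pderiv]
  exact mul_nonneg (hP _) (by positivity)

theorem eval_nonneg_of_mem_nonnegCoeffs {x : σ → ℝ} (hx : ∀ i, 0 ≤ x i) {P : MvPolynomial σ ℝ}
    (hP : P ∈ nonnegCoeffs σ) : 0 ≤ eval x P := by
  rw [eval_eq]
  exact sum_nonneg fun d _ => mul_nonneg (hP d) (prod_nonneg fun i _ => pow_nonneg (hx i) _)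

end NonnegCoeffs

theorem abs_eval_iterate_pderiv_sub_le {σ : Type*} {x : σ → ℝ} (hx : ∀ i, 0 ≤ x i) (i j : σ)
    {P : MvPolynomial σ ℝ} (hP : P ∈ nonnegCoeffs σ) (k : ℕ) :
    |eval x ((⇑(pderiv (R := ℝ) i - pderiv (R := ℝ) j))^[k] P)| ≤
      eval x ((⇑(pderiv (R := ℝ) i + pderiv (R := ℝ) j))^[k] P) :=
  abs_iterate_sub_le (S := (nonnegCoeffs σ).toAddSubmonoid)
    (f := (pderiv (R := ℝ) i).toLinearMap.toAddMonoidHom)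
    (g := (pderiv (R := ℝ) j).toLinearMap.toAddMonoidHom) (ψ := (eval x).toAddMonoidHom)
    (fun _ hP => mapsTo_pderiv_nonnegCoeffs i hP) (fun _ hP => mapsTo_pderiv_nonnegCoeffs j hP)
    (fun _ hP => eval_nonneg_of_mem_nonnegCoeffs hx hP) k hP

local notation "D₊" => (pderiv (R := ℝ) (σ := Fin 2) 0 + pderiv (R := ℝ) (σ := Fin 2) 1)
local notation "D₋" => (pderiv (R := ℝ) (σ := Fin 2) 0 - pderiv (R := ℝ) (σ := Fin 2) 1)

theorem hasDerivAt_eval_one_sub (P : MvPolynomial (Fin 2) ℝ) (q : ℝ) :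
    HasDerivAt (fun q => eval ![q, 1 - q] P) (eval ![q, 1 - q] (D₋ P)) q := by
  induction P using MvPolynomial.induction_on with
  | C c => simpa using hasDerivAt_const q c
  | add P Q hP hQ =>
    simp only [map_add]
    exact hP.fun_add hQ
  | mul_X P i hP =>
    have hX : HasDerivAt (fun q => ![q, 1 - q] i) (eval ![q, 1 - q] (D₋ (X i))) q := by
      fin_cases i
      · simpa [pderiv_X_of_ne] using hasDerivAt_id' q
      · simpa [pderiv_X_of_ne] using (hasDerivAt_id' q).const_sub 1
    simp only [map_mul, eval_X, Derivation.leibniz, smul_eq_mul, map_add]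
    exact (hP.fun_mul hX).congr_deriv (by ring)

theorem iteratedDeriv_eval_one_sub (P : MvPolynomial (Fin 2) ℝ) (k : ℕ) :
    iteratedDeriv k (fun q => eval ![q, 1 - q] P) = fun q => eval ![q, 1 - q] ((⇑D₋)^[k] P) := by
  induction k generalizing P with
  | zero => simp
  | succ k ih =>
    rw [iteratedDeriv_succ', funext fun q => (hasDerivAt_eval_one_sub P q).deriv, ih,
      Function.iterate_succ_apply]

/-- The law of `X_0`, with `X 0` standing for `p` and `X 1` for `1 - p`. -/
def mixPoly (ν : ℕ → ℝ) (j : ℕ) : MvPolynomial (Fin 2) ℝ :=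
  C (ν j) * X 0 + if j = 0 then X 1 else 0

def drPoly (m : ℕ) (ν : ℕ → ℝ) (n : ℕ) : ℕ → MvPolynomial (Fin 2) ℝ :=
  (finDrStep m)^[n] (mixPoly ν)

theorem drPoly_succ (m : ℕ) (ν : ℕ → ℝ) (n : ℕ) :
    drPoly m ν (n + 1) = finDrStep m (drPoly m ν n) :=
  Function.iterate_succ_apply' _ _ _

theorem drLaw_eq_eval (m : ℕ) (ν : ℕ → ℝ) (q : ℝ) (n j : ℕ) :
    drLaw m ν q n j = eval ![q, 1 - q] (drPoly m ν n j) := by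
  suffices drLaw m ν q n = fun j => eval ![q, 1 - q] (drPoly m ν n j) from congrFun this j
  induction n with
  | zero =>
    funext j
    simp only [drLaw, drPoly, Function.iterate_zero, id_eq, mix, mixPoly]
    split_ifs <;> simp <;> ring
  | succ n ih =>
    funext j
    rw [drLaw, Function.iterate_succ_apply', ← drLaw, ih, drStep_eq_finDrStep, drPoly_succ,
      map_finDrStep]
    rfl

theorem drPoly_mem_nonnegCoeffs (m : ℕ) {ν : ℕ → ℝ} (hν : ∀ j, 0 ≤ ν j) (n j : ℕ) :
    drPoly m ν n j ∈ nonnegCoeffs (Fin 2) := by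
  induction n generalizing j with
  | zero =>
    refine add_mem (mul_mem (C_mem_nonnegCoeffs (hν j)) (X_mem_nonnegCoeffs 0)) ?_
    split_ifs
    exacts [X_mem_nonnegCoeffs 1, zero_mem _]
  | succ n ih =>
    rw [drPoly_succ]
    exact finDrStep_mem ih m j

theorem sum_mixPoly (ν : ℕ → ℝ) (j : ℕ) :
    ∑ j' ∈ range (j + 1), mixPoly ν j' = C (∑ j' ∈ range (j + 1), ν j') * X 0 + X 1 := by
  simp [mixPoly, sum_add_distrib, ← sum_mul, map_sum]

theorem eval_iterate_affine_le {c a b : ℝ} (hc0 : 0 ≤ c) (hc1 : c ≤ 1) (ha : 0 ≤ a) (hb : 0 < b)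
    (k : ℕ) :
    eval ![a, b] ((⇑D₊)^[k] (C c * X 0 + X 1)) ≤
      k ! * (2 / b) ^ k * eval ![a, b] (C c * X 0 + X 1) := by
  have hD₁ : D₊ (C c * X 0 + X 1) = C (c + 1) := by simp
  have hD₂ : D₊ (C (c + 1)) = 0 := by simp
  have heval : eval ![a, b] (C c * X 0 + X 1) = c * a + b := by simp
  rcases k with _ | _ | k
  · simp
  · rw [Function.iterate_one, hD₁, heval, eval_C]
    rw [Nat.factorial_one, Nat.cast_one, pow_one, one_mul, div_mul_eq_mul_div, le_div_iff₀ hb]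
    nlinarith
  · rw [Function.iterate_succ_apply, Function.iterate_succ_apply, hD₁, hD₂, iterate_map_zero,
      map_zero, heval]
    positivity

theorem eval_iterate_sum_drPoly_le (m : ℕ) {ν : ℕ → ℝ} (hν : ∀ j, 0 ≤ ν j)
    (hν1 : ∀ N, ∑ j ∈ range N, ν j ≤ 1) {a b : ℝ} (ha : 0 ≤ a) (hb : 0 < b) (n j k : ℕ) :
    eval ![a, b] ((⇑D₊)^[k] (∑ j' ∈ range (j + 1), drPoly m ν n j')) ≤
      k ! * (2 * m ^ n / b) ^ k * eval ![a, b] (∑ j' ∈ range (j + 1), drPoly m ν n j') := by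
  induction n generalizing j k with
  | zero =>
    simpa [drPoly, sum_mixPoly] using
      eval_iterate_affine_le (sum_nonneg fun j _ => hν j) (hν1 _) ha hb k
  | succ n ih =>
    have hx : ∀ i, 0 ≤ ![a, b] i := Fin.forall_fin_two.2 ⟨ha, hb.le⟩
    simp only [drPoly_succ, sum_finDrStep]
    convert iterate_convPowCdf_le
      (fun P hP => add_mem (mapsTo_pderiv_nonnegCoeffs 0 hP) (mapsTo_pderiv_nonnegCoeffs 1 hP))
      (fun P hP => eval_nonneg_of_mem_nonnegCoeffs hx hP) (drPoly_mem_nonnegCoeffs m hν n)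
      (by positivity) ih m (j + 1) k using 3
    ring

theorem deriv_PXn_zero_bound_one_general
    (m : ℕ) (ν : ℕ → ℝ)
    (hνnn : ∀ k, 0 ≤ ν k) (hνsum : ∑' k, ν k = 1)
    (p : ℝ) (hp : p ∈ Set.Ioo (0 : ℝ) 1)
    (k : ℕ) (n : ℕ) :
    |iteratedDeriv k (fun q => drLaw m ν q n 0) p| ≤
      2 ^ k * (k.factorial : ℝ) * (m : ℝ) ^ (k * n) * drLaw m ν p n 0 / (1 - p) ^ k := by
  obtain ⟨hp0, hp1⟩ := hp
  have hν : Summable ν := by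
    by_contra h
    simp [tsum_eq_zero_of_not_summable h] at hνsum
  have hν1 : ∀ N, ∑ j ∈ range N, ν j ≤ 1 := fun N => hνsum ▸ hν.sum_le_tsum _ fun j _ => hνnn j
  have hx : ∀ i, 0 ≤ ![p, 1 - p] i := Fin.forall_fin_two.2 ⟨hp0.le, by simp [hp1.le]⟩
  simp_rw [drLaw_eq_eval, iteratedDeriv_eval_one_sub]
  calc |eval ![p, 1 - p] ((⇑D₋)^[k] (drPoly m ν n 0))|
      ≤ eval ![p, 1 - p] ((⇑D₊)^[k] (drPoly m ν n 0)) :=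
        abs_eval_iterate_pderiv_sub_le hx 0 1 (drPoly_mem_nonnegCoeffs m hνnn n 0) k
    _ ≤ k ! * (2 * m ^ n / (1 - p)) ^ k * eval ![p, 1 - p] (drPoly m ν n 0) := by
        simpa using eval_iterate_sum_drPoly_le m hνnn hν1 hp0.le (by linarith) n 0 k
    _ = _ := by rw [div_pow, mul_pow, ← pow_mul, mul_comm n k]; ring

/-- Proposition 2.2 (1). Fix `δ ∈ (0, 1/2)` and assume
`c_2 = E(m^{(1-δ)X_0^*}) < ∞`. Then for every `p ∈ (0,1)`, `k ≥ 1` and `n ≥ 1`,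
`|dᵏ/dpᵏ P(X_n = 0)| ≤ 2^k k! m^{kn} P(X_n = 0)/(1-p)^k`. -/
theorem deriv_PXn_zero_bound_one
    (m : ℕ) (hm : 2 ≤ m) (ν : ℕ → ℝ)
    (hν0 : ν 0 = 0) (hνnn : ∀ k, 0 ≤ ν k) (hνsum : ∑' k, ν k = 1)
    (δ : ℝ) (hδ : δ ∈ Set.Ioo (0 : ℝ) (1 / 2))
    (hc2 : Summable fun j : ℕ => ν j * (m : ℝ) ^ ((1 - δ) * (j : ℝ)))
    (p : ℝ) (hp : p ∈ Set.Ioo (0 : ℝ) 1)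
    (k : ℕ) (hk : 1 ≤ k) (n : ℕ) (hn : 1 ≤ n) :
    |iteratedDeriv k (fun q => drLaw m ν q n 0) p| ≤
      2 ^ k * (k.factorial : ℝ) * (m : ℝ) ^ (k * n) * drLaw m ν p n 0 / (1 - p) ^ k :=
  deriv_PXn_zero_bound_one_general m ν hνnn hνsum p hp k n
end
end

section
/- For every integer k ≥ 1, every integer n ≥ 0 and every p ∈ (0,1), |d^k/dp^k P(X_n = 0)| ≤ (2^k · k!/(1−p)^k) · Σ_{A ⊆ leaves, |A| = k} P( ∇^A 1_{{X(e_n)=0}} ≠ 0 and X(v)=0 for all v ∈ A ). -/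
noncomputable section

/-- The value at the root of the depth-`n` `m`-ary tree determined by the leaf values
`f` via the Derrida–Retaux rule `X(w) = (X(1w) + ⋯ + X(mw) - 1)⁺`; the root branches
according to the last letter of a leaf word (truncated ℕ-subtraction realizes the
positive part). -/
def rootVal (m : ℕ) : (n : ℕ) → ((Fin n → Fin m) → ℕ) → ℕ
  | 0, f => f Fin.elim0
  | n + 1, f => (∑ a : Fin m, rootVal m n (fun w => f (Fin.snoc w a))) - 1

/-- A configuration `ω` assigns to each leaf `v` a pair `(X_0^*(v), U(v))`;
`cfgWeight` is its probability weight under the product law. -/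
def cfgWeight (m n : ℕ) (ν : ℕ → ℝ) (p : ℝ) (ω : (Fin n → Fin m) → ℕ × Bool) : ℝ :=
  ∏ v : Fin n → Fin m, (ν (ω v).1 * (if (ω v).2 then p else 1 - p))

/-- The leaf values `X(v) = X_0^*(v)·U(v)` of a configuration. -/
def cfgLeaf {m n : ℕ} (ω : (Fin n → Fin m) → ℕ × Bool) : (Fin n → Fin m) → ℕ :=
  fun v => if (ω v).2 then (ω v).1 else 0

/-- `Θ^B X`: the leaf configuration equal to `X(v)` off `B` and to `X_0^*(v)` on `B`. -/
def cfgTheta {m n : ℕ} (ω : (Fin n → Fin m) → ℕ × Bool)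
    (B : Finset (Fin n → Fin m)) : (Fin n → Fin m) → ℕ :=
  fun v => if v ∈ B then (ω v).1 else cfgLeaf ω v

/-- `∇^A f(X) = Σ_{B ⊆ A} (-1)^{|A|-|B|} f(Θ^B X)`. -/
def cfgNabla {m n : ℕ} (ω : (Fin n → Fin m) → ℕ × Bool)
    (A : Finset (Fin n → Fin m)) (f : ((Fin n → Fin m) → ℕ) → ℝ) : ℝ :=
  ∑ B ∈ A.powerset, (-1 : ℝ) ^ (A.card - B.card) * f (cfgTheta ω B)

/-!
Conditioning on the coins `U` gives
`P(X_n = 0) = ∑_u G(u) ∏_v q^{u_v} (1-q)^{1-u_v}` with `G(u) = P(X_n = 0 | U = u)`, a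
multilinear polynomial in `q`. Its `k`-th derivative is `k!` times a sum over `k`-sets `A` of
sums of `G` signed by the coins on `A`. Grouping the coin vectors that agree off `A` turns each
of these into `∑` over coins vanishing on `A` of the finite difference `∇^A`, and
`|∇^A| ≤ 2^k · 1{∇^A ≠ 0}`. Coins vanish on `A` with probability `(1-p)^k`, which is the
factor lost when passing back to an unconditional probability.
-/

open Finset

section Multilinear

variable {𝕜 : Type*} [NontriviallyNormedField 𝕜]

theorem iteratedDeriv_eq_factorial_mul {φ : ℕ → 𝕜 → 𝕜}
    (hφ : ∀ k x, HasDerivAt (φ k) ((k + 1) * φ (k + 1) x) x) (k : ℕ) :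
    iteratedDeriv k (φ 0) = fun x => k.factorial * φ k x := by
  induction k with
  | zero => funext x; simp
  | succ k ih =>
    funext x
    rw [iteratedDeriv_succ, ih, ((hφ k x).const_mul _).deriv, Nat.factorial_succ]
    push_cast
    ring

theorem sum_powersetCard_sum_sdiff_insert {ι M : Type*} [DecidableEq ι] [AddCommMonoid M]
    (s : Finset ι) (k : ℕ) (h : Finset ι → M) :
    ∑ A ∈ s.powersetCard k, ∑ w ∈ s \ A, h (insert w A)
      = (k + 1) • ∑ B ∈ s.powersetCard (k + 1), h B := by
  have hcard : ∀ B ∈ s.powersetCard (k + 1), (k + 1) • h B = ∑ _w ∈ B, h B := fun B hB => by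
    rw [sum_const, (mem_powersetCard.1 hB).2]
  rw [smul_sum, sum_congr rfl hcard, sum_sigma', sum_sigma']
  refine sum_bij' (fun a _ => ⟨insert a.2 a.1, a.2⟩) (fun b _ => ⟨b.1.erase b.2, b.2⟩)
    ?_ ?_ ?_ ?_ fun _ _ => rfl
  · rintro ⟨A, w⟩ h
    simp only [mem_sigma, mem_powersetCard, mem_sdiff] at h ⊢
    exact ⟨⟨insert_subset h.2.1 h.1.1, by rw [card_insert_of_notMem h.2.2, h.1.2]⟩,
      mem_insert_self _ _⟩
  · rintro ⟨B, w⟩ h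
    simp only [mem_sigma, mem_powersetCard, mem_sdiff] at h ⊢
    exact ⟨⟨(erase_subset _ _).trans h.1.1, by rw [card_erase_of_mem h.2, h.1.2]; rfl⟩,
      h.1.1 h.2, notMem_erase _ _⟩
  · rintro ⟨A, w⟩ h
    simp only [mem_sigma, mem_sdiff] at h
    simp [erase_insert h.2.2]
  · rintro ⟨B, w⟩ h
    simp only [mem_sigma] at h
    simp [insert_erase h.2]

theorem hasDerivAt_sum_powersetCard_prod {ι : Type*} [DecidableEq ι] (s : Finset ι)
    {f : ι → 𝕜 → 𝕜} {c : ι → 𝕜} (hf : ∀ i x, HasDerivAt (f i) (c i) x) (k : ℕ) (x : 𝕜) :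
    HasDerivAt (fun x => ∑ A ∈ s.powersetCard k, (∏ i ∈ A, c i) * ∏ i ∈ s \ A, f i x)
      ((k + 1) * ∑ A ∈ s.powersetCard (k + 1), (∏ i ∈ A, c i) * ∏ i ∈ s \ A, f i x) x := by
  have hterm : ∀ A ∈ s.powersetCard k,
      HasDerivAt (fun x => (∏ i ∈ A, c i) * ∏ i ∈ s \ A, f i x)
        (∑ w ∈ s \ A, (∏ i ∈ insert w A, c i) * ∏ i ∈ s \ insert w A, f i x) x := by
    intro A _
    refine ((HasDerivAt.fun_finsetProd fun i _ => hf i x).const_mul (∏ i ∈ A, c i)).congr_deriv ?_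
    rw [mul_sum]
    refine sum_congr rfl fun w hw => ?_
    rw [prod_insert (mem_sdiff.1 hw).2, sdiff_insert, smul_eq_mul]
    ring
  refine (HasDerivAt.fun_sum hterm).congr_deriv ?_
  rw [sum_powersetCard_sum_sdiff_insert s k fun B => (∏ i ∈ B, c i) * ∏ i ∈ s \ B, f i x,
    nsmul_eq_mul]
  push_cast
  rfl

end Multilinear

section BoolCube

variable {V : Type*} [Fintype V] [DecidableEq V]

def coinWeight (b : Bool) (q : ℝ) : ℝ := if b then q else 1 - q

def coinSign (b : Bool) : ℝ := if b then 1 else -1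

theorem hasDerivAt_coinWeight (b : Bool) (q : ℝ) : HasDerivAt (coinWeight b) (coinSign b) q := by
  cases b
  · show HasDerivAt (fun q => 1 - q) (-1) q
    exact (hasDerivAt_id' q).const_sub 1
  · exact hasDerivAt_id' q

theorem coinWeight_nonneg (b : Bool) {q : ℝ} (hq0 : 0 ≤ q) (hq1 : q ≤ 1) :
    0 ≤ coinWeight b q := by
  cases b <;> simp [coinWeight, hq0, hq1]

def bernoulliExpect (G : (V → Bool) → ℝ) (q : ℝ) : ℝ :=
  ∑ u, G u * ∏ v, coinWeight (u v) q

theorem iteratedDeriv_bernoulliExpect (G : (V → Bool) → ℝ) (k : ℕ) (q : ℝ) :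
    iteratedDeriv k (bernoulliExpect G) q = k.factorial *
      ∑ A ∈ powersetCard k univ, ∑ u,
        G u * (∏ v ∈ A, coinSign (u v)) * ∏ v ∈ univ \ A, coinWeight (u v) q := by
  set φ : ℕ → ℝ → ℝ := fun k q => ∑ u, G u *
    ∑ A ∈ powersetCard k univ, (∏ v ∈ A, coinSign (u v)) * ∏ v ∈ univ \ A, coinWeight (u v) q
  have hφ0 : φ 0 = bernoulliExpect G := by
    funext q
    simp [φ, bernoulliExpect]
  have hφ : ∀ k q, HasDerivAt (φ k) ((k + 1) * φ (k + 1) q) q := fun k q => by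
    refine (HasDerivAt.fun_sum fun u _ => (hasDerivAt_sum_powersetCard_prod univ
      (fun v => hasDerivAt_coinWeight (u v)) k q).const_mul (G u)).congr_deriv ?_
    simp only [φ, mul_sum]
    exact sum_congr rfl fun u _ => sum_congr rfl fun A _ => by ring
  rw [← hφ0, iteratedDeriv_eq_factorial_mul hφ]
  simp only [φ, mul_sum, mul_assoc]
  rw [sum_comm]

def vanishingOn (A : Finset V) : Finset (V → Bool) := univ.filter fun u => ∀ v ∈ A, u v = false

theorem mem_vanishingOn {A : Finset V} {u : V → Bool} :
    u ∈ vanishingOn A ↔ ∀ v ∈ A, u v = false := by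
  simp [vanishingOn]

theorem prod_coinWeight_of_mem_vanishingOn {A : Finset V} {u : V → Bool}
    (hu : u ∈ vanishingOn A) (q : ℝ) :
    ∏ v, coinWeight (u v) q = (1 - q) ^ #A * ∏ v ∈ univ \ A, coinWeight (u v) q := by
  have hA : ∏ v ∈ A, coinWeight (u v) q = (1 - q) ^ #A := by
    rw [prod_congr rfl fun v hv => by rw [mem_vanishingOn.1 hu v hv, coinWeight], prod_const]
    rfl
  rw [← prod_sdiff (subset_univ A), hA, mul_comm]

def cubeNabla (A : Finset V) (G : (V → Bool) → ℝ) (u : V → Bool) : ℝ :=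
  ∑ B ∈ A.powerset, (-1 : ℝ) ^ (#A - #B) * G (A.piecewise (fun v => decide (v ∈ B)) u)

theorem sum_eq_sum_vanishingOn_sum_powerset {M : Type*} [AddCommMonoid M] (A : Finset V)
    (g : (V → Bool) → M) :
    ∑ u, g u = ∑ u ∈ vanishingOn A,
      ∑ B ∈ A.powerset, g (A.piecewise (fun v => decide (v ∈ B)) u) := by
  rw [← sum_product']
  symm
  refine sum_nbij' (fun P => A.piecewise (fun v => decide (v ∈ P.2)) P.1)
    (fun u => (A.piecewise (fun _ => false) u, A.filter (u · = true)))
    (fun _ _ => mem_univ _) (fun u _ => ?_) (fun P hP => ?_) (fun u _ => ?_) fun _ _ => rfl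
  · simp only [mem_product, mem_powerset, mem_vanishingOn]
    exact ⟨fun v hv => by simp [hv], filter_subset _ _⟩
  · simp only [mem_product, mem_powerset, mem_vanishingOn] at hP
    refine Prod.ext (funext fun v => ?_) (ext fun v => ?_)
    · by_cases hv : v ∈ A <;> simp [hv, hP.1]
    · by_cases hv : v ∈ A
      · simp [hv]
      · simpa [hv] using fun h => hv (hP.2 h)
  · funext v
    by_cases hv : v ∈ A <;> simp [hv]

theorem sum_mul_prod_coinSign_eq_sum_cubeNabla (G : (V → Bool) → ℝ) (A : Finset V) (q : ℝ) :
    ∑ u, G u * (∏ v ∈ A, coinSign (u v)) * ∏ v ∈ univ \ A, coinWeight (u v) q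
      = ∑ u ∈ vanishingOn A,
          cubeNabla A G u * ∏ v ∈ univ \ A, coinWeight (u v) q := by
  rw [sum_eq_sum_vanishingOn_sum_powerset A]
  refine sum_congr rfl fun u _ => ?_
  rw [cubeNabla, sum_mul]
  refine sum_congr rfl fun B hB => ?_
  have hsign : ∏ v ∈ A, coinSign (A.piecewise (fun v => decide (v ∈ B)) u v)
      = (-1) ^ (#A - #B) := by
    rw [prod_congr rfl fun v hv => by rw [piecewise_eq_of_mem _ _ _ hv]]
    simp [coinSign, prod_ite, filter_notMem_eq_sdiff,
      card_sdiff_of_subset (mem_powerset.1 hB)]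
  have hrest : ∏ v ∈ univ \ A, coinWeight (A.piecewise (fun v => decide (v ∈ B)) u v) q
      = ∏ v ∈ univ \ A, coinWeight (u v) q :=
    prod_congr rfl fun v hv => by rw [piecewise_eq_of_notMem _ _ _ (mem_sdiff.1 hv).2]
  rw [hsign, hrest]
  ring

end BoolCube

section Summability

variable {V κ : Type*} [Fintype V]

theorem summable_prod_apply_of_nonneg {c : κ → ℝ} (hc0 : 0 ≤ c) (hc : Summable c) :
    Summable fun f : V → κ => ∏ v, c (f v) := by
  classical
  refine summable_of_sum_le (c := ∏ _v : V, ∑' z, c z) (fun f => prod_nonneg fun v _ => hc0 _)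
    fun S => ?_
  let T : Finset κ := S.biUnion fun f => univ.image f
  calc ∑ f ∈ S, ∏ v, c (f v)
      ≤ ∑ f ∈ Fintype.piFinset fun _ => T, ∏ v, c (f v) :=
        sum_le_sum_of_subset_of_nonneg
          (fun f hf => Fintype.mem_piFinset.2 fun v =>
            mem_biUnion.2 ⟨f, hf, mem_image_of_mem _ (mem_univ v)⟩)
          fun f _ _ => prod_nonneg fun v _ => hc0 _
    _ = ∏ _v : V, ∑ z ∈ T, c z := (prod_univ_sum _ _).symm
    _ ≤ ∏ _v : V, ∑' z, c z :=
        prod_le_prod (fun _ _ => sum_nonneg fun z _ => hc0 z)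
          fun _ _ => hc.sum_le_tsum _ fun z _ => hc0 z

theorem summable_prod_apply_mul {c : κ → ℝ} (hc : Summable c) {r : (V → κ) → ℝ} {R : ℝ}
    (hr : ∀ f, |r f| ≤ R) : Summable fun f : V → κ => (∏ v, c (f v)) * r f :=
  .of_norm_bounded ((summable_prod_apply_of_nonneg (fun _ => abs_nonneg _) hc.abs).mul_right R)
    fun f => by
      rw [Real.norm_eq_abs, abs_mul, abs_prod]
      exact mul_le_mul_of_nonneg_left (hr f) (prod_nonneg fun _ _ => abs_nonneg _)

end Summability

section Configurations

variable {m n : ℕ} {ν : ℕ → ℝ}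

theorem cfgWeight_prod (q : ℝ) (x : (Fin n → Fin m) → ℕ) (u : (Fin n → Fin m) → Bool) :
    cfgWeight m n ν q (Function.prod x u) = (∏ v, ν (x v)) * ∏ v, coinWeight (u v) q := by
  rw [cfgWeight, ← prod_mul_distrib]
  rfl

theorem tsum_cfgWeight_mul (hν : Summable ν) {r : ((Fin n → Fin m) → ℕ × Bool) → ℝ} {R : ℝ}
    (hr : ∀ ω, |r ω| ≤ R) (q : ℝ) :
    ∑' ω, cfgWeight m n ν q ω * r ω
      = ∑ u, (∏ v, coinWeight (u v) q) * ∑' x, (∏ v, ν (x v)) * r (Function.prod x u) := by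
  have hc : Summable fun z : ℕ × Bool => ν z.1 * coinWeight z.2 q :=
    summable_mul_of_summable_norm (f := ν) (g := (coinWeight · q)) hν.norm .of_finite
  let e : ((Fin n → Fin m) → Bool) × ((Fin n → Fin m) → ℕ) ≃ ((Fin n → Fin m) → ℕ × Bool) :=
    (Equiv.prodComm _ _).trans (Equiv.arrowProdEquivProdArrow _ _ _).symm
  have he : ∀ u x, cfgWeight m n ν q (e (u, x)) * r (e (u, x))
      = (∏ v, coinWeight (u v) q) * ((∏ v, ν (x v)) * r (Function.prod x u)) := fun u x => by
    rw [show e (u, x) = Function.prod x u from rfl, cfgWeight_prod]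
    ring
  have hsum : Summable fun ω => cfgWeight m n ν q ω * r ω :=
    (summable_prod_apply_mul hc hr).congr fun ω => by rw [cfgWeight]; rfl
  replace hsum : Summable fun p => cfgWeight m n ν q (e p) * r (e p) := e.summable_iff.2 hsum
  rw [← e.tsum_eq, hsum.tsum_prod' fun u =>
    ((summable_prod_apply_mul hν fun x => hr _).mul_left _).congr fun x => (he u x).symm,
    tsum_fintype]
  simp only [he, tsum_mul_left]

def condExpectGivenCoins (ν : ℕ → ℝ) (f : ((Fin n → Fin m) → ℕ) → ℝ)
    (u : (Fin n → Fin m) → Bool) : ℝ :=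
  ∑' x, (∏ v, ν (x v)) * f (cfgLeaf (Function.prod x u))

variable {f : ((Fin n → Fin m) → ℕ) → ℝ}

theorem tsum_cfgWeight_mul_eq_bernoulliExpect (hν : Summable ν) (hf : ∀ g, |f g| ≤ 1)
    (q : ℝ) :
    ∑' ω, cfgWeight m n ν q ω * f (cfgLeaf ω) = bernoulliExpect (condExpectGivenCoins ν f) q := by
  rw [tsum_cfgWeight_mul hν (fun ω => hf (cfgLeaf ω)), bernoulliExpect]
  exact sum_congr rfl fun u _ => mul_comm _ _

theorem cfgLeaf_prod_piecewise {A B : Finset (Fin n → Fin m)} (hBA : B ⊆ A)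
    (x : (Fin n → Fin m) → ℕ) {u : (Fin n → Fin m) → Bool} (hu : ∀ v ∈ A, u v = false) :
    cfgLeaf (Function.prod x (A.piecewise (fun v => decide (v ∈ B)) u))
      = cfgTheta (Function.prod x u) B := by
  funext v
  by_cases hvA : v ∈ A
  · by_cases hvB : v ∈ B <;> simp [cfgLeaf, cfgTheta, Function.prod, hvA, hvB, hu]
  · have hvB : v ∉ B := fun h => hvA (hBA h)
    cases hu' : u v <;> simp [cfgLeaf, cfgTheta, Function.prod, hvA, hvB, hu']

theorem cubeNabla_condExpectGivenCoins (hν : Summable ν) (hf : ∀ g, |f g| ≤ 1)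
    {A : Finset (Fin n → Fin m)} {u : (Fin n → Fin m) → Bool} (hu : ∀ v ∈ A, u v = false) :
    cubeNabla A (condExpectGivenCoins ν f) u
      = ∑' x, (∏ v, ν (x v)) * cfgNabla (Function.prod x u) A f := by
  have hsummable : ∀ B ∈ A.powerset, Summable fun x : (Fin n → Fin m) → ℕ =>
      (∏ v, ν (x v)) * ((-1 : ℝ) ^ (#A - #B) * f (cfgTheta (Function.prod x u) B)) :=
    fun B _ => summable_prod_apply_mul hν fun x => by simpa using hf _
  simp only [cubeNabla, cfgNabla, mul_sum]
  rw [Summable.tsum_finsetSum hsummable]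
  refine sum_congr rfl fun B hB => ?_
  rw [condExpectGivenCoins, ← tsum_mul_left]
  refine tsum_congr fun x => ?_
  rw [cfgLeaf_prod_piecewise (mem_powerset.1 hB) x hu]
  ring

theorem abs_cfgNabla_le (hf : ∀ g, |f g| ≤ 1) (ω : (Fin n → Fin m) → ℕ × Bool)
    (A : Finset (Fin n → Fin m)) : |cfgNabla ω A f| ≤ 2 ^ #A :=
  calc |cfgNabla ω A f|
      ≤ ∑ B ∈ A.powerset, |(-1 : ℝ) ^ (#A - #B) * f (cfgTheta ω B)| := abs_sum_le_sum_abs _ _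
    _ ≤ ∑ B ∈ A.powerset, 1 := sum_le_sum fun B _ => by simpa using hf (cfgTheta ω B)
    _ = 2 ^ #A := by simp

theorem abs_cubeNabla_condExpectGivenCoins_le (hν0 : 0 ≤ ν) (hν : Summable ν)
    (hf : ∀ g, |f g| ≤ 1) {A : Finset (Fin n → Fin m)} {u : (Fin n → Fin m) → Bool}
    (hu : ∀ v ∈ A, u v = false) :
    |cubeNabla A (condExpectGivenCoins ν f) u| ≤ 2 ^ #A * ∑' x, (∏ v, ν (x v)) *
      if cfgNabla (Function.prod x u) A f ≠ 0 ∧ ∀ v ∈ A, cfgLeaf (Function.prod x u) v = 0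
        then 1 else 0 := by
  have hbound : ∀ x, |(∏ v, ν (x v)) * cfgNabla (Function.prod x u) A f| ≤ 2 ^ #A *
      ((∏ v, ν (x v)) * if cfgNabla (Function.prod x u) A f ≠ 0 ∧
        ∀ v ∈ A, cfgLeaf (Function.prod x u) v = 0 then 1 else 0) := by
    intro x
    have hw : 0 ≤ ∏ v, ν (x v) := prod_nonneg fun v _ => hν0 _
    by_cases h : cfgNabla (Function.prod x u) A f = 0
    · simp [h]
    · have hleaf : ∀ v ∈ A, cfgLeaf (Function.prod x u) v = 0 := fun v hv => by
        simp [cfgLeaf, Function.prod, hu v hv]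
      rw [if_pos ⟨h, hleaf⟩, mul_one, abs_mul, abs_of_nonneg hw, mul_comm]
      exact mul_le_mul_of_nonneg_right (abs_cfgNabla_le hf _ A) hw
  have hsummable := summable_prod_apply_mul hν fun x => abs_cfgNabla_le hf (Function.prod x u) A
  have hsummable' := summable_prod_apply_mul hν (R := 1) (r := fun x =>
    if cfgNabla (Function.prod x u) A f ≠ 0 ∧ ∀ v ∈ A, cfgLeaf (Function.prod x u) v = 0
      then 1 else 0) fun x => by split_ifs <;> simp
  rw [cubeNabla_condExpectGivenCoins hν hf hu, ← tsum_mul_left]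
  have habs := norm_tsum_le_tsum_norm hsummable.norm
  simp only [Real.norm_eq_abs] at habs
  exact habs.trans (hsummable.abs.tsum_le_tsum hbound (hsummable'.mul_left _))

theorem pow_mul_abs_sum_cubeNabla_le (hν0 : 0 ≤ ν) (hν : Summable ν) (hf : ∀ g, |f g| ≤ 1)
    {p : ℝ} (hp0 : 0 ≤ p) (hp1 : p ≤ 1) (A : Finset (Fin n → Fin m)) :
    (1 - p) ^ #A * |∑ u ∈ vanishingOn A,
        cubeNabla A (condExpectGivenCoins ν f) u * ∏ v ∈ univ \ A, coinWeight (u v) p|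
      ≤ 2 ^ #A * ∑' ω, cfgWeight m n ν p ω *
          if cfgNabla ω A f ≠ 0 ∧ ∀ v ∈ A, cfgLeaf ω v = 0 then 1 else 0 := by
  set I : ((Fin n → Fin m) → ℕ × Bool) → ℝ := fun ω =>
    if cfgNabla ω A f ≠ 0 ∧ ∀ v ∈ A, cfgLeaf ω v = 0 then 1 else 0
  have hI0 : ∀ ω, 0 ≤ I ω := fun ω => by positivity
  have hI : ∀ ω, |I ω| ≤ 1 := fun ω => by simp only [I]; split_ifs <;> simp
  have hcoin : ∀ (s : Finset (Fin n → Fin m)) (u : (Fin n → Fin m) → Bool),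
      0 ≤ ∏ v ∈ s, coinWeight (u v) p :=
    fun s u => prod_nonneg fun v _ => coinWeight_nonneg _ hp0 hp1
  rw [tsum_cfgWeight_mul hν hI p]
  calc (1 - p) ^ #A * |∑ u ∈ vanishingOn A,
        cubeNabla A (condExpectGivenCoins ν f) u * ∏ v ∈ univ \ A, coinWeight (u v) p|
      ≤ (1 - p) ^ #A * ∑ u ∈ vanishingOn A,
        (2 ^ #A * ∑' x, (∏ v, ν (x v)) * I (Function.prod x u)) *
          ∏ v ∈ univ \ A, coinWeight (u v) p := by
        refine mul_le_mul_of_nonneg_left ((abs_sum_le_sum_abs _ _).trans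
          (sum_le_sum fun u hu => ?_)) (pow_nonneg (by linarith) _)
        rw [abs_mul, abs_of_nonneg (hcoin _ u)]
        exact mul_le_mul_of_nonneg_right
          (abs_cubeNabla_condExpectGivenCoins_le hν0 hν hf (mem_vanishingOn.1 hu)) (hcoin _ u)
    _ = 2 ^ #A * ∑ u ∈ vanishingOn A,
        (∏ v, coinWeight (u v) p) * ∑' x, (∏ v, ν (x v)) * I (Function.prod x u) := by
        rw [mul_sum, mul_sum]
        refine sum_congr rfl fun u hu => ?_
        rw [prod_coinWeight_of_mem_vanishingOn hu]
        ring
    _ ≤ 2 ^ #A * ∑ u, (∏ v, coinWeight (u v) p) *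
        ∑' x, (∏ v, ν (x v)) * I (Function.prod x u) :=
        mul_le_mul_of_nonneg_left (sum_le_sum_of_subset_of_nonneg (subset_univ _)
          fun u _ _ => mul_nonneg (hcoin _ u) (tsum_nonneg fun x =>
            mul_nonneg (prod_nonneg fun v _ => hν0 _) (hI0 _))) (by positivity)

end Configurations

open scoped Classical in
theorem deriv_PXn_zero_tree_bound_general
    (m : ℕ) (n : ℕ) (ν : ℕ → ℝ)
    (hνnn : ∀ j, 0 ≤ ν j) (hνsum : ∑' j, ν j = 1)
    (p : ℝ) (hp : p ∈ Set.Ioo (0 : ℝ) 1)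
    (k : ℕ) :
    |iteratedDeriv k
        (fun q => ∑' ω : (Fin n → Fin m) → ℕ × Bool,
          cfgWeight m n ν q ω * (if rootVal m n (cfgLeaf ω) = 0 then (1 : ℝ) else 0)) p| ≤
      (2 ^ k * (k.factorial : ℝ) / (1 - p) ^ k) *
        ∑ A ∈ Finset.powersetCard k (Finset.univ : Finset (Fin n → Fin m)),
          ∑' ω : (Fin n → Fin m) → ℕ × Bool,
            cfgWeight m n ν p ω *
              (if cfgNabla ω A (fun g => if rootVal m n g = 0 then (1 : ℝ) else 0) ≠ 0 ∧
                  ∀ v ∈ A, cfgLeaf ω v = 0 then (1 : ℝ) else 0) := by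
  set f : ((Fin n → Fin m) → ℕ) → ℝ := fun g => if rootVal m n g = 0 then 1 else 0
  have hf : ∀ g, |f g| ≤ 1 := fun g => by simp only [f]; split_ifs <;> simp
  have hν : Summable ν := by
    by_contra h
    simp [tsum_eq_zero_of_not_summable h] at hνsum
  have h1p : 0 < 1 - p := sub_pos.2 hp.2
  have hF : (fun q => ∑' ω, cfgWeight m n ν q ω * f (cfgLeaf ω))
      = bernoulliExpect (condExpectGivenCoins ν f) :=
    funext (tsum_cfgWeight_mul_eq_bernoulliExpect hν hf)
  have hA : ∀ A ∈ powersetCard k univ,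
      |∑ u ∈ vanishingOn A,
        cubeNabla A (condExpectGivenCoins ν f) u * ∏ v ∈ univ \ A, coinWeight (u v) p|
      ≤ 2 ^ k / (1 - p) ^ k * ∑' ω, cfgWeight m n ν p ω *
          if cfgNabla ω A f ≠ 0 ∧ ∀ v ∈ A, cfgLeaf ω v = 0 then 1 else 0 := by
    intro A hA
    rw [(mem_powersetCard.1 hA).2.symm, div_mul_eq_mul_div, le_div_iff₀ (by positivity), mul_comm]
    exact pow_mul_abs_sum_cubeNabla_le hνnn hν hf hp.1.le hp.2.le A
  rw [hF, iteratedDeriv_bernoulliExpect, abs_mul, Nat.abs_cast]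
  simp only [sum_mul_prod_coinSign_eq_sum_cubeNabla]
  calc (k.factorial : ℝ) * |∑ A ∈ powersetCard k univ, _|
      ≤ k.factorial * ∑ A ∈ powersetCard k univ, 2 ^ k / (1 - p) ^ k * _ :=
        mul_le_mul_of_nonneg_left ((abs_sum_le_sum_abs _ _).trans (sum_le_sum hA)) (by positivity)
    _ = _ := by rw [← mul_sum]; ring

open scoped Classical in
/-- Lemma 3.2. For every `k ≥ 1`, `n ≥ 0` and `p ∈ (0,1)`,
`|dᵏ/dpᵏ P(X_n = 0)| ≤ (2^k k!/(1-p)^k) Σ_{|A|=k} P(∇^A 1_{X(e_n)=0} ≠ 0, X|_A = 0)`. -/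
theorem deriv_PXn_zero_tree_bound
    (m : ℕ) (hm : 2 ≤ m) (n : ℕ) (ν : ℕ → ℝ)
    (hν0 : ν 0 = 0) (hνnn : ∀ j, 0 ≤ ν j) (hνsum : ∑' j, ν j = 1)
    (p : ℝ) (hp : p ∈ Set.Ioo (0 : ℝ) 1)
    (k : ℕ) (hk : 1 ≤ k) :
    |iteratedDeriv k
        (fun q => ∑' ω : (Fin n → Fin m) → ℕ × Bool,
          cfgWeight m n ν q ω * (if rootVal m n (cfgLeaf ω) = 0 then (1 : ℝ) else 0)) p| ≤
      (2 ^ k * (k.factorial : ℝ) / (1 - p) ^ k) *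
        ∑ A ∈ Finset.powersetCard k (Finset.univ : Finset (Fin n → Fin m)),
          ∑' ω : (Fin n → Fin m) → ℕ × Bool,
            cfgWeight m n ν p ω *
              (if cfgNabla ω A (fun g => if rootVal m n g = 0 then (1 : ℝ) else 0) ≠ 0 ∧
                  ∀ v ∈ A, cfgLeaf ω v = 0 then (1 : ℝ) else 0) :=
  deriv_PXn_zero_tree_bound_general m n ν hνnn hνsum p hp k
end
end

section
/- Let n ≥ 0 and i ≥ 0 be integers and let A be a nonempty set of leaves. Then for every leaf configuration on the event { ∇^A 1_{{X(e_n)=i}} ≠ 0 }, the following three statements hold: (1) X(w) ≤ (length of w) + i for every word w of length ≤ n; (2) Θ^A X(e_n) ≥ max(i, 1); (3) there exist nonnegative integers x_1, …, x_m with (x_1+⋯+x_m−1)^+ = i such that, for each j ∈ {1,…,m}, ∇^{A_j} 1_{{X(j)=x_j}} ≠ 0, where A_j := {v ∈ A : the last letter of v is j} and X(j) is the value at the length-one word j. -/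
/-!
`∇^A 1_{X(e_n)=i}` is an alternating sum over `B ⊆ A` of `1_{Θ^B X(e_n)=i}`, so some `B` has
`Θ^B X(e_n) = i`. Since `Θ^B X` grows with `B` and the recursion is monotone in the leaves,
`X(e_n) ≤ i ≤ Θ^A X(e_n)`; as a vertex exceeds its child by at most one, (1) follows. If
`Θ^A X(e_n) = 0`, all terms `1_{Θ^B X(e_n)=i}` coincide and the alternating sum over the nonempty
`A` vanishes, which gives (2). For (3), expand `1_{X(e_n)=i} = Σ_x Π_j 1_{X(j)=x_j}` over the
finitely many `x` with `(x_1+⋯+x_m-1)⁺ = i`: as `X(j)` only sees the leaves with last letter `j`,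
`∇^A` of each product splits as `Π_j ∇^{A_j}`, so some `x` has all factors nonzero.
-/

noncomputable section

/-- Value at the vertex given by a word `w` of length `ℓ ≤ n` (a suffix of leaf words):
the root value of the subtree whose leaves are the leaves `v` ending with `w`. -/
def vertexVal (m n ℓ : ℕ) (hℓ : ℓ ≤ n) (f : (Fin n → Fin m) → ℕ)
    (w : Fin ℓ → Fin m) : ℕ :=
  rootVal m (n - ℓ) (fun u => f (fun i =>
    if h : (i : ℕ) < n - ℓ then u ⟨i, h⟩
    else w ⟨(i : ℕ) - (n - ℓ), by have := i.2; omega⟩))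

/-- Value at the length-one word `j` (the generation-`(n-1)` vertex `j`). -/
def gen1Val (m n : ℕ) (f : (Fin n → Fin m) → ℕ) (j : Fin m) : ℕ :=
  rootVal m (n - 1) (fun u => f (fun i =>
    if h : (i : ℕ) < n - 1 then u ⟨i, h⟩ else j))

/-- `Θ^B X`: leaf configuration equal to `X(v) = X_0^*(v)·u(v)` off `B` and to
`X_0^*(v)` on `B`. -/
def thetaCfg {m n : ℕ} (Xs : (Fin n → Fin m) → ℕ) (u : (Fin n → Fin m) → Bool)
    (B : Finset (Fin n → Fin m)) : (Fin n → Fin m) → ℕ :=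
  fun v => if v ∈ B then Xs v else (if u v then Xs v else 0)

/-- `∇^A f(X) = Σ_{B ⊆ A} (-1)^{|A|-|B|} f(Θ^B X)`. -/
def nablaCfg {m n : ℕ} (Xs : (Fin n → Fin m) → ℕ) (u : (Fin n → Fin m) → Bool)
    (A : Finset (Fin n → Fin m)) (f : ((Fin n → Fin m) → ℕ) → ℝ) : ℝ :=
  ∑ B ∈ A.powerset, (-1 : ℝ) ^ (A.card - B.card) * f (thetaCfg Xs u B)

section BigOperatorIdentities

open Finset

variable {α ι R : Type*} [CommRing R]

theorem neg_one_pow_sub_of_le {a b : ℕ} (h : b ≤ a) :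
    (-1 : R) ^ (a - b) = (-1) ^ a * (-1) ^ b := by
  obtain ⟨c, rfl⟩ := Nat.exists_eq_add_of_le h
  rw [Nat.add_sub_cancel_left, pow_add, mul_right_comm, ← pow_add, ← two_mul, pow_mul]
  simp

theorem sum_powerset_neg_one_pow_card_sub_of_nonempty {A : Finset α} (hA : A.Nonempty) :
    ∑ B ∈ A.powerset, (-1 : R) ^ (#A - #B) = 0 := by
  have h := congrArg (Int.cast : ℤ → R) (sum_powerset_neg_one_pow_card_of_nonempty hA)
  push_cast at h
  rw [sum_congr rfl fun B hB => neg_one_pow_sub_of_le (card_le_card (mem_powerset.mp hB)),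
    ← mul_sum, h, mul_zero]

variable [Fintype ι] [DecidableEq ι]

theorem prod_sum_powerset_filter [DecidableEq α] (A : Finset α) (p : α → ι) (G : ι → Finset α → R) :
    ∏ j, ∑ B ∈ (A.filter (p · = j)).powerset, G j B
      = ∑ B ∈ A.powerset, ∏ j, G j (B.filter (p · = j)) := by
  rw [prod_univ_sum]
  symm
  refine sum_nbij' (fun B j => B.filter (p · = j)) (fun C => univ.biUnion C)
    ?_ ?_ ?_ ?_ fun _ _ => rfl
  · intro B hB
    simp only [mem_powerset, Fintype.mem_piFinset] at hB ⊢
    exact fun j => filter_subset_filter (p · = j) hB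
  · intro C hC
    simp only [mem_powerset, Fintype.mem_piFinset] at hC ⊢
    intro v hv
    obtain ⟨j, -, hvj⟩ := mem_biUnion.mp hv
    exact (mem_filter.mp (hC j hvj)).1
  · intro B _
    ext v
    simp
  · intro C hC
    simp only [mem_powerset, Fintype.mem_piFinset] at hC
    funext j
    ext v
    simp only [mem_filter, mem_biUnion, mem_univ, true_and]
    constructor
    · rintro ⟨⟨k, hvk⟩, rfl⟩
      rwa [(mem_filter.mp (hC k hvk)).2]
    · exact fun hvj => ⟨⟨j, hvj⟩, (mem_filter.mp (hC j hvj)).2⟩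

theorem prod_neg_one_pow_card_filter_sub {A B : Finset α} (hBA : B ⊆ A) (p : α → ι) :
    ∏ j, (-1 : R) ^ (#(A.filter (p · = j)) - #(B.filter (p · = j))) = (-1) ^ (#A - #B) := by
  have card_eq (s : Finset α) : #s = ∑ j, #(s.filter (p · = j)) :=
    card_eq_sum_card_fiberwise fun _ _ => mem_coe.mpr (mem_univ _)
  rw [prod_congr rfl fun j _ => neg_one_pow_sub_of_le (card_le_card (filter_subset_filter _ hBA)),
    prod_mul_distrib, prod_pow_eq_pow_sum, prod_pow_eq_pow_sum, ← card_eq, ← card_eq,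
    neg_one_pow_sub_of_le (card_le_card hBA)]

theorem exists_indicator_sum_sub_one_eq_sum_prod (i : ℕ) :
    ∃ T : Finset (ι → ℕ), (∀ x ∈ T, (∑ j, x j) - 1 = i) ∧ ∀ y : ι → ℕ,
      (if (∑ j, y j) - 1 = i then (1 : R) else 0) = ∑ x ∈ T, ∏ j, if y j = x j then 1 else 0 := by
  refine ⟨(Fintype.piFinset fun _ => range (i + 2)).filter fun x => (∑ j, x j) - 1 = i,
    fun x hx => (mem_filter.mp hx).2, fun y => ?_⟩
  simp_rw [Fintype.prod_boole, ← funext_iff, sum_ite_eq, mem_filter, Fintype.mem_piFinset,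
    mem_range]
  refine if_congr ⟨fun hy => ⟨fun j => ?_, hy⟩, fun hy => hy.2⟩ rfl rfl
  have := single_le_sum (fun _ _ => Nat.zero_le _) (mem_univ j) (f := y)
  omega

end BigOperatorIdentities

section TreeValues

open Finset

variable {m : ℕ}

theorem rootVal_mono : ∀ {n : ℕ}, Monotone (rootVal m n)
  | 0, _, _, h => h _
  | _ + 1, _, _, h => Nat.sub_le_sub_right (sum_le_sum fun _ _ => rootVal_mono fun _ => h _) 1

theorem rootVal_comp_snoc_le {k : ℕ} (G : (Fin (k + 1) → Fin m) → ℕ) (a : Fin m) :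
    rootVal m k (fun u => G (Fin.snoc u a)) ≤ rootVal m (k + 1) G + 1 := by
  have h := single_le_sum (f := fun b => rootVal m k (fun u => G (Fin.snoc u b)))
    (fun _ _ => Nat.zero_le _) (mem_univ a)
  simp only [rootVal]
  omega

theorem rootVal_cast {n n' : ℕ} (h : n = n') (f : (Fin n → Fin m) → ℕ) :
    rootVal m n f = rootVal m n' (fun u => f (fun i => u (Fin.cast h i))) := by
  subst h; rfl

theorem vertexVal_zero {n : ℕ} (f : (Fin n → Fin m) → ℕ) (w : Fin 0 → Fin m) :
    vertexVal m n 0 (Nat.zero_le n) f w = rootVal m n f := by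
  unfold vertexVal
  congr 1
  funext v
  congr 1
  funext i
  rw [dif_pos (by omega)]
  rfl

-- `fun j => w j.succ` is the child of `w` (its first letter dropped).
theorem vertexVal_succ_le {n ℓ : ℕ} (hℓ : ℓ + 1 ≤ n) (f : (Fin n → Fin m) → ℕ)
    (w : Fin (ℓ + 1) → Fin m) :
    vertexVal m n (ℓ + 1) hℓ f w ≤ vertexVal m n ℓ (by omega) f (fun j => w j.succ) + 1 := by
  have hk : n - ℓ = n - (ℓ + 1) + 1 := by omega
  unfold vertexVal
  rw [rootVal_cast hk]
  refine le_of_eq_of_le ?_ (rootVal_comp_snoc_le _ (w 0))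
  congr 1
  funext v
  congr 1
  funext i
  by_cases h1 : (i : ℕ) < n - (ℓ + 1)
  · rw [dif_pos h1, dif_pos (by omega)]
    beta_reduce
    have : Fin.cast hk ⟨i, by omega⟩ = Fin.castSucc ⟨i, h1⟩ := Fin.ext rfl
    rw [this, Fin.snoc_castSucc]
  · by_cases h2 : (i : ℕ) < n - ℓ
    · rw [dif_neg h1, dif_pos h2]
      beta_reduce
      have : Fin.cast hk ⟨i, h2⟩ = Fin.last (n - (ℓ + 1)) := Fin.ext (by simp; omega)
      rw [this, Fin.snoc_last]
      exact congrArg w (Fin.ext (by simp; omega))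
    · rw [dif_neg h1, dif_neg h2]
      exact congrArg w (Fin.ext (by simp [Fin.succ]; omega))

theorem vertexVal_le_add_rootVal {n : ℕ} (f : (Fin n → Fin m) → ℕ) :
    ∀ (ℓ : ℕ) (hℓ : ℓ ≤ n) (w : Fin ℓ → Fin m), vertexVal m n ℓ hℓ f w ≤ ℓ + rootVal m n f
  | 0, _, w => (vertexVal_zero f w).le.trans (Nat.le_add_left _ _)
  | ℓ + 1, hℓ, w => by
    have := vertexVal_le_add_rootVal f ℓ (by omega) (fun j => w j.succ)
    have := vertexVal_succ_le hℓ f w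
    omega

theorem gen1Val_congr {n : ℕ} (hn : 1 ≤ n) {f f' : (Fin n → Fin m) → ℕ} (j : Fin m)
    (h : ∀ v : Fin n → Fin m, v ⟨n - 1, Nat.sub_one_lt_of_lt hn⟩ = j → f v = f' v) :
    gen1Val m n f j = gen1Val m n f' j := by
  unfold gen1Val
  congr 1
  funext v
  exact h _ (by simp)

theorem rootVal_eq_sum_gen1Val_sub_one {n : ℕ} (hn : 1 ≤ n) (f : (Fin n → Fin m) → ℕ) :
    rootVal m n f = (∑ j, gen1Val m n f j) - 1 := by
  obtain ⟨k, rfl⟩ : ∃ k, n = k + 1 := ⟨n - 1, by omega⟩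
  rfl

end TreeValues

section FiniteDifferences

open Finset

variable {m n : ℕ} (Xs : (Fin n → Fin m) → ℕ) (u : (Fin n → Fin m) → Bool)

theorem thetaCfg_mono {B B' : Finset (Fin n → Fin m)} (h : B ⊆ B') :
    thetaCfg Xs u B ≤ thetaCfg Xs u B' := by
  intro v
  by_cases hv : v ∈ B
  · simp [thetaCfg, hv, h hv]
  · simp only [thetaCfg, hv, if_false]
    split_ifs <;> simp

theorem thetaCfg_empty : thetaCfg Xs u ∅ = fun v => if u v then Xs v else 0 := by
  funext v
  simp [thetaCfg]

theorem thetaCfg_congr {B B' : Finset (Fin n → Fin m)} {v : Fin n → Fin m} (h : v ∈ B ↔ v ∈ B') :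
    thetaCfg Xs u B v = thetaCfg Xs u B' v := by
  simp only [thetaCfg, h]

variable {Xs u}

theorem exists_subset_of_nablaCfg_ne_zero {A : Finset (Fin n → Fin m)}
    {f : ((Fin n → Fin m) → ℕ) → ℝ} (h : nablaCfg Xs u A f ≠ 0) :
    ∃ B ⊆ A, f (thetaCfg Xs u B) ≠ 0 := by
  obtain ⟨B, hB, hne⟩ := exists_ne_zero_of_sum_ne_zero h
  exact ⟨B, mem_powerset.mp hB, right_ne_zero_of_mul hne⟩

theorem nablaCfg_eq_zero_of_forall_eq {A : Finset (Fin n → Fin m)} (hA : A.Nonempty)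
    {f : ((Fin n → Fin m) → ℕ) → ℝ} {c : ℝ} (h : ∀ B ⊆ A, f (thetaCfg Xs u B) = c) :
    nablaCfg Xs u A f = 0 := by
  unfold nablaCfg
  rw [sum_congr rfl fun B hB => by rw [h B (mem_powerset.mp hB)], ← sum_mul,
    sum_powerset_neg_one_pow_card_sub_of_nonempty hA, zero_mul]

theorem nablaCfg_sum {κ : Type*} (T : Finset κ) (A : Finset (Fin n → Fin m))
    (f : κ → ((Fin n → Fin m) → ℕ) → ℝ) :
    nablaCfg Xs u A (fun g => ∑ x ∈ T, f x g) = ∑ x ∈ T, nablaCfg Xs u A (f x) := by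
  simp only [nablaCfg, mul_sum]
  exact sum_comm

theorem nablaCfg_prod {ι : Type*} [Fintype ι] [DecidableEq ι] (A : Finset (Fin n → Fin m))
    (p : (Fin n → Fin m) → ι) (φ : ι → ((Fin n → Fin m) → ℕ) → ℝ)
    (hφ : ∀ j g g', (∀ v, p v = j → g v = g' v) → φ j g = φ j g') :
    nablaCfg Xs u A (fun g => ∏ j, φ j g) = ∏ j, nablaCfg Xs u (A.filter (p · = j)) (φ j) := by
  unfold nablaCfg
  rw [prod_sum_powerset_filter]
  refine sum_congr rfl fun B hB => ?_
  rw [prod_mul_distrib, prod_neg_one_pow_card_filter_sub (mem_powerset.mp hB)]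
  congr 1
  refine prod_congr rfl fun j _ => hφ j _ _ fun v hv => thetaCfg_congr Xs u ?_
  simp [hv]

end FiniteDifferences

open scoped Classical in
/-- Lemma 3.3. On the event `∇^A 1_{X(e_n)=i} ≠ 0`:
(1) `X(w) ≤ |w| + i` for every word `w` of length `≤ n`;
(2) `Θ^A X(e_n) ≥ max(i,1)`;
(3) there are `x_1,…,x_m ≥ 0` with `(x_1+⋯+x_m-1)⁺ = i` and
`∇^{A_j} 1_{X(j)=x_j} ≠ 0` for each `j`, where `A_j` is the set of members of `A`
with last letter `j`. -/
theorem nabla_nonzero_consequences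
    (m : ℕ) (n : ℕ) (hn : 1 ≤ n) (i : ℕ)
    (Xs : (Fin n → Fin m) → ℕ)
    (u : (Fin n → Fin m) → Bool)
    (A : Finset (Fin n → Fin m)) (hA : A.Nonempty)
    (hnabla : nablaCfg Xs u A
      (fun g => if rootVal m n g = i then (1 : ℝ) else 0) ≠ 0) :
    (∀ ℓ : ℕ, ∀ hℓ : ℓ ≤ n, ∀ w : Fin ℓ → Fin m,
        vertexVal m n ℓ hℓ (fun v => if u v then Xs v else 0) w ≤ ℓ + i) ∧
    max i 1 ≤ rootVal m n (thetaCfg Xs u A) ∧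
    ∃ x : Fin m → ℕ, (∑ j, x j) - 1 = i ∧
      ∀ j : Fin m,
        nablaCfg Xs u (A.filter (fun v => v ⟨n - 1, by omega⟩ = j))
          (fun g => if gen1Val m n g j = x j then (1 : ℝ) else 0) ≠ 0 := by
  have hmono {B B' : Finset (Fin n → Fin m)} (h : B ⊆ B') :
      rootVal m n (thetaCfg Xs u B) ≤ rootVal m n (thetaCfg Xs u B') :=
    rootVal_mono (thetaCfg_mono Xs u h)
  obtain ⟨B, hBA, hB⟩ : ∃ B ⊆ A, rootVal m n (thetaCfg Xs u B) = i := by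
    obtain ⟨B, hBA, hB⟩ := exists_subset_of_nablaCfg_ne_zero hnabla
    exact ⟨B, hBA, by simpa using hB⟩
  refine ⟨fun ℓ hℓ w => ?_, max_le (hB ▸ hmono hBA) ?_, ?_⟩
  · have := hmono (Finset.empty_subset B)
    rw [thetaCfg_empty, hB] at this
    have := vertexVal_le_add_rootVal (fun v => if u v then Xs v else 0) ℓ hℓ w
    omega
  · -- if `Θ^A X(e_n) = 0` then every `Θ^B X(e_n)` vanishes, and `∇^A` of a constant is zero
    by_contra! h0
    have hzero (B' : Finset _) (hB' : B' ⊆ A) : rootVal m n (thetaCfg Xs u B') = 0 := by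
      have := hmono hB'
      omega
    exact hnabla (nablaCfg_eq_zero_of_forall_eq hA fun B' hB' => by
      rw [hzero B' hB'])
  · obtain ⟨T, hT, hindicator⟩ := exists_indicator_sum_sub_one_eq_sum_prod (ι := Fin m) (R := ℝ) i
    simp_rw [rootVal_eq_sum_gen1Val_sub_one hn, hindicator, nablaCfg_sum] at hnabla
    obtain ⟨x, hx, hne⟩ := Finset.exists_ne_zero_of_sum_ne_zero hnabla
    rw [nablaCfg_prod A (fun v => v ⟨n - 1, Nat.sub_one_lt_of_lt hn⟩) _
      fun j _ _ h => by simp only [gen1Val_congr hn j h]] at hne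
    exact ⟨x, hT x hx, fun j => Finset.prod_ne_zero_iff.mp hne j (Finset.mem_univ j)⟩
end
end

section
/- For every integer k ≥ 0 and every integer n ≥ 1, Σ_{A ⊆ leaves with |A| = k} m^{−|O_{e_n,A}|} ≤ m^{k^m} · n^{max(k−1, 0)}, where the sum is over all k-element sets A of words of length n over the alphabet {1,…,m}. -/
/-!
Write `S_k` for the sum over `k`-sets of leaves. A `(k+1)`-set is `B ∪ {v}` with `|B| = k`.
If `d ≥ 1` is the first index with `v_d ∈ O_B`, the words `v_1, …, v_{d-1}` are new, so
`|O_{B ∪ {v}}| ≥ |O_B| + d - 1`; and `v_d ∈ O_B` means that `v` agrees with some `u ∈ B` from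
position `d` on, which leaves at most `|B| m^d` choices of `v` for each `d`. Summing over `v`
gives `S_{k+1} ≤ m n k S_k`, hence `S_{k+1} ≤ (m n)^k k!`, and `k! m^k ≤ m^{(k+1)^m}`.
-/

noncomputable section

/-- Words over `{1,…,m}` of length at most `n` (the vertices of the tree). -/
abbrev Word (m n : ℕ) := Σ ℓ : Fin (n + 1), Fin (ℓ : ℕ) → Fin m

/-- `v_i`: the word obtained from the leaf word `v` by deleting its first `i` letters. -/
def wordDrop {m n : ℕ} (v : Fin n → Fin m) (i : ℕ) : Word m n :=
  ⟨⟨n - i, Nat.lt_succ_of_le (Nat.sub_le n i)⟩,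
    fun j => v ⟨i + (j : ℕ), by have h2 : (j : ℕ) < n - i := j.2; omega⟩⟩

open scoped Classical in
/-- `O_{e_n,A} = {v_i : v ∈ A, 1 ≤ i ≤ n}`. -/
def spineSet {m n : ℕ} (A : Finset (Fin n → Fin m)) : Finset (Word m n) :=
  (A ×ˢ Finset.Icc 1 n).image (fun q => wordDrop q.1 q.2)

open Finset
open scoped Nat

theorem Finset.sum_powersetCard_succ_le_sum_insert {α β : Type*} [DecidableEq α]
    [AddCommMonoid β] [PartialOrder β] [IsOrderedAddMonoid β] {f : Finset α → β}
    (hf : ∀ A, 0 ≤ f A) (s : Finset α) (k : ℕ) :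
    ∑ A ∈ powersetCard (k + 1) s, f A ≤ ∑ B ∈ powersetCard k s, ∑ a ∈ s, f (insert a B) := by
  have hcover : powersetCard (k + 1) s ⊆
      (powersetCard k s ×ˢ s).image fun p => insert p.2 p.1 := by
    intro A hA
    obtain ⟨hAs, hAcard⟩ := mem_powersetCard.1 hA
    obtain ⟨a, ha⟩ := card_pos.1 (by omega : 0 < #A)
    refine mem_image.2 ⟨(A.erase a, a), mem_product.2 ⟨?_, hAs ha⟩, insert_erase ha⟩
    exact mem_powersetCard.2 ⟨(erase_subset a A).trans hAs, by rw [card_erase_of_mem ha]; omega⟩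
  calc ∑ A ∈ powersetCard (k + 1) s, f A
      ≤ ∑ A ∈ (powersetCard k s ×ˢ s).image fun p => insert p.2 p.1, f A :=
        sum_le_sum_of_subset_of_nonneg hcover fun A _ _ => hf A
    _ ≤ ∑ p ∈ powersetCard k s ×ˢ s, f (insert p.2 p.1) :=
        sum_image_le_of_nonneg fun A _ => hf A
    _ = ∑ B ∈ powersetCard k s, ∑ a ∈ s, f (insert a B) := sum_product _ _ _

variable {m n : ℕ}

theorem eq_of_wordDrop_eq {v u : Fin n → Fin m} {i j : ℕ} (hi : i ≤ n) (hj : j ≤ n)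
    (h : wordDrop v i = wordDrop u j) : i = j := by
  have hlen := congrArg (fun w : Word m n => (w.1 : ℕ)) h
  simp only [wordDrop] at hlen
  omega

theorem wordDrop_eq_wordDrop_iff {v u : Fin n → Fin m} {i : ℕ} :
    wordDrop v i = wordDrop u i ↔ ∀ t : Fin n, i ≤ t → v t = u t := by
  simp only [wordDrop, Sigma.mk.injEq, heq_eq_eq, true_and, funext_iff]
  constructor
  · intro h t ht
    simpa [Nat.add_sub_cancel' ht] using h ⟨t - i, by omega⟩
  · exact fun h j => h _ (Nat.le_add_right _ _)

theorem mem_spineSet {A : Finset (Fin n → Fin m)} {x : Word m n} :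
    x ∈ spineSet A ↔ ∃ v ∈ A, ∃ i ∈ Icc 1 n, wordDrop v i = x := by
  simp only [spineSet, mem_image, mem_product, Prod.exists, and_assoc, exists_and_left]

theorem spineSet_mono {A B : Finset (Fin n → Fin m)} (h : A ⊆ B) : spineSet A ⊆ spineSet B := by
  intro x hx
  obtain ⟨v, hv, i, hi, rfl⟩ := mem_spineSet.1 hx
  exact mem_spineSet.2 ⟨v, h hv, i, hi, rfl⟩

theorem wordDrop_mem_spineSet_iff {B : Finset (Fin n → Fin m)} {v : Fin n → Fin m} {i : ℕ}
    (hi : i ∈ Icc 1 n) : wordDrop v i ∈ spineSet B ↔ ∃ u ∈ B, wordDrop v i = wordDrop u i := by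
  rw [mem_spineSet]
  constructor
  · rintro ⟨u, hu, j, hj, hji⟩
    obtain rfl := eq_of_wordDrop_eq (mem_Icc.1 hj).2 (mem_Icc.1 hi).2 hji
    exact ⟨u, hu, hji.symm⟩
  · rintro ⟨u, hu, h⟩
    exact ⟨u, hu, i, hi, h.symm⟩

theorem card_spineSet_add_le_card_spineSet_insert {B : Finset (Fin n → Fin m)}
    {v : Fin n → Fin m} {d : ℕ} (hd : d ≤ n + 1)
    (hnew : ∀ i ∈ Ico 1 d, wordDrop v i ∉ spineSet B) :
    #(spineSet B) + (d - 1) ≤ #(spineSet (insert v B)) := by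
  have hinj : Set.InjOn (wordDrop v) (Ico 1 d) := fun i hi j hj h =>
    eq_of_wordDrop_eq (by simp at hi; omega) (by simp at hj; omega) h
  have hdisj : Disjoint (spineSet B) ((Ico 1 d).image (wordDrop v)) := by
    rw [disjoint_right]
    rintro _ hx
    obtain ⟨i, hi, rfl⟩ := mem_image.1 hx
    exact hnew i hi
  have hsub : (Ico 1 d).image (wordDrop v) ⊆ spineSet (insert v B) := by
    intro x hx
    obtain ⟨i, hi, rfl⟩ := mem_image.1 hx
    exact mem_spineSet.2 ⟨v, mem_insert_self v B, i, by simp at hi ⊢; omega, rfl⟩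
  calc #(spineSet B) + (d - 1) = #(spineSet B ∪ (Ico 1 d).image (wordDrop v)) := by
        rw [card_union_of_disjoint hdisj, card_image_of_injOn hinj, Nat.card_Ico]
    _ ≤ #(spineSet (insert v B)) :=
        card_le_card (union_subset (spineSet_mono (subset_insert v B)) hsub)

theorem le_card_spineSet_singleton (v : Fin n → Fin m) : n ≤ #(spineSet {v}) := by
  simpa [spineSet] using
    card_spineSet_add_le_card_spineSet_insert (B := ∅) (v := v) (d := n + 1) le_rfl
      (by simp [spineSet])

theorem exists_first_wordDrop_mem_spineSet (hn : 1 ≤ n) {B : Finset (Fin n → Fin m)}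
    (hB : B.Nonempty) (v : Fin n → Fin m) :
    ∃ d ∈ Icc 1 n, wordDrop v d ∈ spineSet B ∧ ∀ i ∈ Ico 1 d, wordDrop v i ∉ spineSet B := by
  obtain ⟨u, hu⟩ := hB
  have hlast : wordDrop v n ∈ spineSet B :=
    (wordDrop_mem_spineSet_iff (by simpa using hn)).2
      ⟨u, hu, wordDrop_eq_wordDrop_iff.2 fun t ht => absurd t.2 (by omega)⟩
  have hex : ∃ d, 1 ≤ d ∧ wordDrop v d ∈ spineSet B := ⟨n, hn, hlast⟩
  refine ⟨Nat.find hex, mem_Icc.2 ⟨(Nat.find_spec hex).1, Nat.find_min' hex ⟨hn, hlast⟩⟩,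
    (Nat.find_spec hex).2, fun i hi hmem => ?_⟩
  exact Nat.find_min hex (mem_Ico.1 hi).2 ⟨(mem_Ico.1 hi).1, hmem⟩

theorem card_filter_wordDrop_eq_le (u : Fin n → Fin m) {i : ℕ} (hi : i ≤ n) :
    #{v | wordDrop v i = wordDrop u i} ≤ m ^ i := by
  calc #{v | wordDrop v i = wordDrop u i}
      ≤ #(univ : Finset (Fin i → Fin m)) := by
        refine card_le_card_of_injOn (fun v t => v (Fin.castLE hi t)) (by simp) ?_
        intro v hv w hw hvw
        funext t
        by_cases ht : i ≤ t
        · rw [wordDrop_eq_wordDrop_iff.1 (mem_filter.1 hv).2 t ht,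
            wordDrop_eq_wordDrop_iff.1 (mem_filter.1 hw).2 t ht]
        · exact congrFun hvw ⟨t, by omega⟩
    _ = m ^ i := by simp

theorem sum_ite_wordDrop_eq_le_one (hm : 0 < m) (u : Fin n → Fin m) {i : ℕ} (hi : i ≤ n) :
    ∑ v, (if wordDrop v i = wordDrop u i then ((m : ℝ) ^ i)⁻¹ else 0) ≤ 1 := by
  rw [← sum_filter, sum_const, nsmul_eq_mul]
  calc (#{v | wordDrop v i = wordDrop u i} : ℝ) * ((m : ℝ) ^ i)⁻¹
      ≤ (m : ℝ) ^ i * ((m : ℝ) ^ i)⁻¹ := by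
        gcongr
        exact_mod_cast card_filter_wordDrop_eq_le u hi
    _ = 1 := mul_inv_cancel₀ (by positivity)

theorem inv_pow_card_spineSet_insert_le (hm : 0 < m) (hn : 1 ≤ n) {B : Finset (Fin n → Fin m)}
    (hB : B.Nonempty) (v : Fin n → Fin m) :
    ((m : ℝ) ^ #(spineSet (insert v B)))⁻¹ ≤ m * ((m : ℝ) ^ #(spineSet B))⁻¹ *
      ∑ u ∈ B, ∑ i ∈ Icc 1 n, if wordDrop v i = wordDrop u i then ((m : ℝ) ^ i)⁻¹ else 0 := by
  have hm1 : (1 : ℝ) ≤ m := by exact_mod_cast hm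
  obtain ⟨d, hd, hmem, hnew⟩ := exists_first_wordDrop_mem_spineSet hn hB v
  obtain ⟨u, hu, hvu⟩ := (wordDrop_mem_spineSet_iff hd).1 hmem
  have hterm : ((m : ℝ) ^ d)⁻¹ ≤
      ∑ u ∈ B, ∑ i ∈ Icc 1 n, if wordDrop v i = wordDrop u i then ((m : ℝ) ^ i)⁻¹ else 0 := by
    have hnonneg : ∀ (w : Fin n → Fin m) i,
        0 ≤ if wordDrop v i = wordDrop w i then ((m : ℝ) ^ i)⁻¹ else 0 := fun w i => by positivity
    calc ((m : ℝ) ^ d)⁻¹ = if wordDrop v d = wordDrop u d then ((m : ℝ) ^ d)⁻¹ else 0 :=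
          (if_pos hvu).symm
      _ ≤ ∑ i ∈ Icc 1 n, if wordDrop v i = wordDrop u i then ((m : ℝ) ^ i)⁻¹ else 0 :=
          single_le_sum (fun i _ => hnonneg u i) hd
      _ ≤ _ := single_le_sum (fun w _ => sum_nonneg fun i _ => hnonneg w i) hu
  calc ((m : ℝ) ^ #(spineSet (insert v B)))⁻¹
      ≤ ((m : ℝ) ^ (#(spineSet B) + (d - 1)))⁻¹ :=
        inv_anti₀ (by positivity) (pow_le_pow_right₀ hm1
          (card_spineSet_add_le_card_spineSet_insert (by simp at hd; omega) hnew))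
    _ = m * ((m : ℝ) ^ #(spineSet B))⁻¹ * ((m : ℝ) ^ d)⁻¹ := by
        obtain ⟨e, rfl⟩ : ∃ e, d = e + 1 := ⟨d - 1, by simp at hd; omega⟩
        rw [Nat.add_sub_cancel, pow_add, pow_succ, mul_inv, mul_inv]
        field_simp
    _ ≤ _ := by gcongr

theorem sum_inv_pow_card_spineSet_insert_le (hm : 0 < m) (hn : 1 ≤ n)
    {B : Finset (Fin n → Fin m)} (hB : B.Nonempty) :
    ∑ v, ((m : ℝ) ^ #(spineSet (insert v B)))⁻¹ ≤ m * n * #B * ((m : ℝ) ^ #(spineSet B))⁻¹ := by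
  calc ∑ v, ((m : ℝ) ^ #(spineSet (insert v B)))⁻¹
      ≤ ∑ v, m * ((m : ℝ) ^ #(spineSet B))⁻¹ *
          ∑ u ∈ B, ∑ i ∈ Icc 1 n, if wordDrop v i = wordDrop u i then ((m : ℝ) ^ i)⁻¹ else 0 :=
        sum_le_sum fun v _ => inv_pow_card_spineSet_insert_le hm hn hB v
    _ = m * ((m : ℝ) ^ #(spineSet B))⁻¹ * ∑ u ∈ B, ∑ i ∈ Icc 1 n,
          ∑ v, if wordDrop v i = wordDrop u i then ((m : ℝ) ^ i)⁻¹ else 0 := by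
        rw [← mul_sum]
        congr 1
        rw [sum_comm]
        exact sum_congr rfl fun u _ => sum_comm
    _ ≤ m * ((m : ℝ) ^ #(spineSet B))⁻¹ * ∑ _u ∈ B, ∑ _i ∈ Icc 1 n, (1 : ℝ) := by
        gcongr with u _ i hi
        exact sum_ite_wordDrop_eq_le_one hm u (mem_Icc.1 hi).2
    _ = m * n * #B * ((m : ℝ) ^ #(spineSet B))⁻¹ := by
        simp only [sum_const, Nat.card_Icc, nsmul_eq_mul, mul_one, add_tsub_cancel_right]
        ring

theorem sum_powersetCard_one_inv_pow_card_spineSet_le (hm : 0 < m) :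
    ∑ A ∈ powersetCard 1 (univ : Finset (Fin n → Fin m)), ((m : ℝ) ^ #(spineSet A))⁻¹ ≤ 1 := by
  have hm1 : (1 : ℝ) ≤ m := by exact_mod_cast hm
  rw [powersetCard_one, sum_map]
  calc ∑ v : Fin n → Fin m, ((m : ℝ) ^ #(spineSet {v}))⁻¹
      ≤ ∑ _v : Fin n → Fin m, ((m : ℝ) ^ n)⁻¹ :=
        sum_le_sum fun v _ =>
          inv_anti₀ (by positivity) (pow_le_pow_right₀ hm1 (le_card_spineSet_singleton v))
    _ = 1 := by
        rw [sum_const, Finset.card_univ, nsmul_eq_mul]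
        simp only [Fintype.card_fun, Fintype.card_fin, Nat.cast_pow]
        exact mul_inv_cancel₀ (by positivity)

theorem sum_powersetCard_succ_inv_pow_card_spineSet_le (hm : 0 < m) (hn : 1 ≤ n) (k : ℕ) :
    ∑ A ∈ powersetCard (k + 1) (univ : Finset (Fin n → Fin m)), ((m : ℝ) ^ #(spineSet A))⁻¹ ≤
      (m * n) ^ k * k ! := by
  induction k with
  | zero => simpa using sum_powersetCard_one_inv_pow_card_spineSet_le hm
  | succ k ih =>
    calc ∑ A ∈ powersetCard (k + 2) univ, ((m : ℝ) ^ #(spineSet A))⁻¹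
        ≤ ∑ B ∈ powersetCard (k + 1) univ, ∑ v, ((m : ℝ) ^ #(spineSet (insert v B)))⁻¹ :=
          sum_powersetCard_succ_le_sum_insert (fun _ => by positivity) _ _
      _ ≤ ∑ B ∈ powersetCard (k + 1) univ, m * n * (k + 1) * ((m : ℝ) ^ #(spineSet B))⁻¹ := by
          refine sum_le_sum fun B hB => ?_
          have hcard := (mem_powersetCard.1 hB).2
          have hB : B.Nonempty := card_pos.1 (by omega)
          simpa [hcard] using sum_inv_pow_card_spineSet_insert_le hm hn hB
      _ = m * n * (k + 1) * ∑ B ∈ powersetCard (k + 1) univ, ((m : ℝ) ^ #(spineSet B))⁻¹ :=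
          (mul_sum _ _ _).symm
      _ ≤ m * n * (k + 1) * ((m * n) ^ k * k !) := by gcongr
      _ = (m * n) ^ (k + 1) * (k + 1) ! := by
          push_cast [Nat.factorial_succ]
          ring

theorem factorial_mul_pow_le_pow_pow (hm : 2 ≤ m) (j : ℕ) : j ! * m ^ j ≤ m ^ ((j + 1) ^ m) :=
  calc j ! * m ^ j ≤ (m ^ j) ^ j * m ^ j := by
        gcongr
        calc j ! ≤ j ^ j := Nat.factorial_le_pow j
          _ ≤ (m ^ j) ^ j := by
            gcongr
            exact j.lt_two_pow_self.le.trans (Nat.pow_le_pow_left hm j)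
    _ = m ^ (j * j + j) := by rw [← pow_mul, ← pow_add]
    _ ≤ m ^ ((j + 1) ^ 2) := Nat.pow_le_pow_right (by omega) (by nlinarith)
    _ ≤ m ^ ((j + 1) ^ m) := Nat.pow_le_pow_right (by omega) (Nat.pow_le_pow_right (by omega) hm)

/-- Lemma 3.5. For every `k ≥ 0` and `n ≥ 1`,
`Σ_{A ⊆ leaves, |A| = k} m^{-|O_{e_n,A}|} ≤ m^{k^m} n^{(k-1)⁺}`. -/
theorem spine_count_bound
    (m : ℕ) (hm : 2 ≤ m) (n : ℕ) (hn : 1 ≤ n) (k : ℕ) :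
    ∑ A ∈ Finset.powersetCard k (Finset.univ : Finset (Fin n → Fin m)),
        ((m : ℝ) ^ (spineSet A).card)⁻¹ ≤
      (m : ℝ) ^ (k ^ m) * (n : ℝ) ^ (k - 1) := by
  cases k with
  | zero => simp [spineSet, zero_pow (by omega : m ≠ 0)]
  | succ j =>
    rw [Nat.add_sub_cancel]
    calc _ ≤ ((m : ℝ) * n) ^ j * j ! :=
          sum_powersetCard_succ_inv_pow_card_spineSet_le (by omega) hn j
      _ = ((j ! * m ^ j : ℕ) : ℝ) * (n : ℝ) ^ j := by push_cast; ring
      _ ≤ (m : ℝ) ^ ((j + 1) ^ m) * (n : ℝ) ^ j := by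
          gcongr
          exact_mod_cast factorial_mul_pow_le_pow_pow hm j
end
end

section
/- Suppose m = 2 and c_1 := P(X_0^* ≥ 2) > 0, and set n_2 := ⌊log(1/c_1)/log(5/4)⌋ + 1. Then for every p ∈ [0,1] and every integer n ≥ n_2, P(X_n = 1) ≤ 1/2. -/
noncomputable section

namespace DRaux

def Sub (μ : ℕ → ℝ) : Prop :=
  (∀ k, 0 ≤ μ k) ∧ ∀ s : Finset ℕ, ∑ j ∈ s, μ j ≤ 1

lemma Sub.summable {μ : ℕ → ℝ} (h : Sub μ) : Summable μ :=
  summable_of_sum_range_le h.1 (fun _ => h.2 _)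

lemma Sub.tsum_le_one {μ : ℕ → ℝ} (h : Sub μ) : ∑' k, μ k ≤ 1 :=
  Summable.tsum_le_of_sum_le h.summable h.2

lemma summable_prod {μ : ℕ → ℝ} (h : Sub μ) :
    Summable (fun q : ℕ × ℕ => μ q.1 * μ q.2) :=
  h.summable.mul_of_nonneg h.summable h.1 h.1

lemma tsum_prod_le_one {μ : ℕ → ℝ} (h : Sub μ) :
    ∑' q : ℕ × ℕ, μ q.1 * μ q.2 ≤ 1 := by
  have h0 : (0:ℝ) ≤ ∑' k, μ k := tsum_nonneg h.1
  have h2 : ∀ b : ℕ, Summable (fun c => μ b * μ c) := fun b => h.summable.mul_left _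
  have h1 : ∑' q : ℕ × ℕ, μ q.1 * μ q.2 = (∑' b, μ b) * ∑' c, μ c := by
    rw [Summable.tsum_prod' (summable_prod h) h2, ← tsum_mul_right]
    exact tsum_congr fun b => by simpa using (tsum_mul_left (a := μ b) (f := μ))
  rw [h1]
  exact mul_le_one₀ h.tsum_le_one h0 h.tsum_le_one

lemma drStep_two (μ : ℕ → ℝ) (j : ℕ) :
    drStep 2 μ j = ∑' q : ℕ × ℕ, if q.1 + q.2 - 1 = j then μ q.1 * μ q.2 else 0 := by
  rw [drStep, ← Equiv.tsum_eq (piFinTwoEquiv fun _ => ℕ).symm]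
  exact tsum_congr fun q => by
    simp [piFinTwoEquiv, Fin.sum_univ_two, Fin.prod_univ_two]

lemma ite_nonneg' {μ : ℕ → ℝ} (h : ∀ k, 0 ≤ μ k) (c : Prop) [Decidable c] (q : ℕ × ℕ) :
    0 ≤ if c then μ q.1 * μ q.2 else 0 := by
  split
  · exact mul_nonneg (h _) (h _)
  · exact le_rfl

lemma summable_ite {μ : ℕ → ℝ} (h : Sub μ) (j : ℕ) :
    Summable (fun q : ℕ × ℕ => if q.1 + q.2 - 1 = j then μ q.1 * μ q.2 else 0) := by
  apply Summable.of_nonneg_of_le (fun q => ite_nonneg' h.1 _ q) _ (summable_prod h)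
  intro q
  split
  · exact le_rfl
  · exact mul_nonneg (h.1 _) (h.1 _)

lemma Sub.drStep2 {μ : ℕ → ℝ} (h : Sub μ) : Sub (drStep 2 μ) := by
  constructor
  · intro j
    rw [drStep_two]
    exact tsum_nonneg fun q => ite_nonneg' h.1 _ q
  · intro s
    have key : ∑ j ∈ s, drStep 2 μ j
        = ∑' q : ℕ × ℕ, ∑ j ∈ s, (if q.1 + q.2 - 1 = j then μ q.1 * μ q.2 else 0) := by
      simp only [drStep_two]
      exact (Summable.tsum_finsetSum fun j _ => summable_ite h j).symm
    rw [key]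
    refine le_trans (Summable.tsum_le_tsum ?_ (summable_sum fun j _ => summable_ite h j)
      (summable_prod h)) (tsum_prod_le_one h)
    intro q
    rw [Finset.sum_ite_eq s (q.1 + q.2 - 1) (fun _ => μ q.1 * μ q.2)]
    split
    · exact le_rfl
    · exact mul_nonneg (h.1 _) (h.1 _)

lemma drStep_two_zero (μ : ℕ → ℝ) :
    drStep 2 μ 0 = μ 0 ^ 2 + 2 * (μ 0 * μ 1) := by
  rw [drStep_two]
  rw [tsum_eq_sum (s := ({(0,0),(0,1),(1,0)} : Finset (ℕ × ℕ))) ?_]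
  · rw [Finset.sum_insert (by decide), Finset.sum_insert (by decide), Finset.sum_singleton]
    norm_num
    ring
  · intro q hq
    simp only [Finset.mem_insert, Finset.mem_singleton, Prod.ext_iff] at hq
    rw [if_neg]
    omega

lemma drStep_two_one (μ : ℕ → ℝ) :
    drStep 2 μ 1 = 2 * (μ 0 * μ 2) + μ 1 ^ 2 := by
  rw [drStep_two]
  rw [tsum_eq_sum (s := ({(0,2),(1,1),(2,0)} : Finset (ℕ × ℕ))) ?_]
  · rw [Finset.sum_insert (by decide), Finset.sum_insert (by decide), Finset.sum_singleton]
    norm_num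
    ring
  · intro q hq
    simp only [Finset.mem_insert, Finset.mem_singleton, Prod.ext_iff] at hq
    rw [if_neg]
    omega

lemma sub_mix {ν : ℕ → ℝ} {p : ℝ} (hνnn : ∀ k, 0 ≤ ν k) (hνsum : ∑' k, ν k = 1)
    (hp0 : 0 ≤ p) (hp1 : p ≤ 1) : Sub (mix ν p) := by
  have hνs : Summable ν := by
    by_contra hcon
    rw [tsum_eq_zero_of_not_summable hcon] at hνsum
    norm_num at hνsum
  constructor
  · intro k
    have h1 : (0:ℝ) ≤ if k = 0 then (1:ℝ) else 0 := by split <;> norm_num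
    exact add_nonneg (mul_nonneg (by linarith) h1) (mul_nonneg hp0 (hνnn k))
  · intro s
    have h1 : ∑ j ∈ s, (if j = 0 then (1:ℝ) else 0) ≤ 1 := by
      rw [Finset.sum_ite_eq' s 0 (fun _ => (1:ℝ))]
      split <;> norm_num
    have h2 : ∑ j ∈ s, ν j ≤ 1 := by
      rw [← hνsum]
      exact Summable.sum_le_tsum s (fun i _ => hνnn i) hνs
    have h3 : (0:ℝ) ≤ ∑ j ∈ s, (if j = 0 then (1:ℝ) else 0) :=
      Finset.sum_nonneg fun j _ => by split <;> norm_num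
    unfold mix
    rw [Finset.sum_add_distrib, ← Finset.mul_sum, ← Finset.mul_sum]
    nlinarith [Finset.sum_nonneg (fun j (_ : j ∈ s) => hνnn j)]

end DRaux

open DRaux in
/-- Lemma 4.4. For `m = 2`, with `c_1 = P(X_0^* ≥ 2) > 0` and
`n_2 = ⌊log(1/c_1)/log(5/4)⌋ + 1`: for every `p ∈ [0,1]` and every `n ≥ n_2`,
`P(X_n = 1) ≤ 1/2`. -/
theorem PXn_one_le_half
    (ν : ℕ → ℝ)
    (hν0 : ν 0 = 0) (hνnn : ∀ k, 0 ≤ ν k) (hνsum : ∑' k, ν k = 1)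
    (c1 : ℝ) (hc1 : c1 = ∑' j : ℕ, ν (j + 2)) (hc1pos : 0 < c1)
    (p : ℝ) (hp : p ∈ Set.Icc (0 : ℝ) 1)
    (n : ℕ) (hn : ⌊Real.log (1 / c1) / Real.log (5 / 4)⌋ + 1 ≤ (n : ℤ)) :
    drLaw 2 ν p n 1 ≤ 1 / 2 := by
  obtain ⟨hp0, hp1⟩ := hp
  have hνs : Summable ν := by
    by_contra hcon
    rw [tsum_eq_zero_of_not_summable hcon] at hνsum
    norm_num at hνsum
  -- c1 = 1 - ν 1
  have h2' := Summable.sum_add_tsum_nat_add (f := ν) 2 hνs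
  rw [hνsum, Finset.sum_range_succ, Finset.sum_range_one, hν0] at h2'
  have hc1' : c1 = 1 - ν 1 := by rw [hc1]; linarith
  have hν1lt : ν 1 < 1 := by linarith
  set μ : ℕ → ℕ → ℝ := fun k => drLaw 2 ν p k with hμdef
  have hiter : ∀ k, μ (k+1) = drStep 2 (μ k) := fun k =>
    Function.iterate_succ_apply' (drStep 2) k (mix ν p)
  have hsub : ∀ k, Sub (μ k) := by
    intro k
    induction k with
    | zero => exact sub_mix hνnn hνsum hp0 hp1
    | succ k ih => rw [hiter]; exact ih.drStep2
  set a : ℕ → ℝ := fun k => μ k 0 with hadef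
  set b : ℕ → ℝ := fun k => μ k 1 with hbdef
  set c : ℕ → ℝ := fun k => μ k 2 with hcdef
  have ha' : ∀ k, a (k+1) = a k ^ 2 + 2 * (a k * b k) := by
    intro k
    show μ (k+1) 0 = _
    rw [hiter k, drStep_two_zero]
  have hb' : ∀ k, b (k+1) = 2 * (a k * c k) + b k ^ 2 := by
    intro k
    show μ (k+1) 1 = _
    rw [hiter k, drStep_two_one]
  have habc : ∀ k, a k + b k + c k ≤ 1 := by
    intro k
    have h := (hsub k).2 ({0, 1, 2} : Finset ℕ)
    rw [Finset.sum_insert (by decide), Finset.sum_insert (by decide),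
      Finset.sum_singleton] at h
    have e0 : μ k 0 = a k := rfl
    have e1 : μ k 1 = b k := rfl
    have e2 : μ k 2 = c k := rfl
    rw [e0, e1, e2] at h
    linarith
  have hnn : ∀ k j, 0 ≤ μ k j := fun k => (hsub k).1
  by_contra hcon
  push_neg at hcon
  -- backward implication
  have hback : ∀ k, 1/2 < b (k+1) → 2/3 < b k := by
    intro k hk
    by_contra hk'
    push_neg at hk'
    have h1 := hb' k
    have h3 := habc k
    have ha0 := hnn k 0
    have hb0 := hnn k 1
    have hc0 := hnn k 2
    nlinarith [sq_nonneg (a k - c k), mul_nonneg hb0 (by linarith : (0:ℝ) ≤ 2/3 - b k),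
      mul_self_le_mul_self (add_nonneg ha0 hc0) (by linarith : a k + c k ≤ 1 - b k)]
  have hdown : ∀ i, i ≤ n → 1/2 < b (n - i) := by
    intro i
    induction i with
    | zero => intro _; simpa using hcon
    | succ i ih =>
      intro h
      have h1 : 1/2 < b (n - i) := ih (by omega)
      have h2 : n - i = (n - (i+1)) + 1 := by omega
      rw [h2] at h1
      linarith [hback _ h1]
  have hbj : ∀ j, j < n → 2/3 < b j := by
    intro j hj
    have h1 := hdown (n - j - 1) (by omega)
    have h2 : n - (n - j - 1) = j + 1 := by omega
    rw [h2] at h1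
    exact hback j h1
  set q : ℕ → ℝ := fun k => 1 - a k - b k with hqdef
  have hqnn : ∀ k, 0 ≤ q k := by
    intro k
    have := habc k
    have := hnn k 2
    simp only [hqdef]
    linarith
  have hgrow : ∀ k, k < n → 5/4 * q k ≤ q (k+1) := by
    intro k hk
    have hb23 := hbj k hk
    have h1 := ha' k
    have h2 := hb' k
    have h3 := habc k
    have ha0 := hnn k 0
    have hqk := hqnn k
    have hqc : 0 ≤ q k - c k := by simp only [hqdef]; linarith
    show 5/4 * q k ≤ 1 - a (k+1) - b (k+1)
    rw [h1, h2]
    have hexp : 1 - (a k ^ 2 + 2 * (a k * b k)) - (2 * (a k * c k) + b k ^ 2)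
        = q k ^ 2 + 2 * (b k * q k) + 2 * (a k * (q k - c k)) := by
      simp only [hqdef]; ring
    rw [hexp]
    nlinarith [sq_nonneg (q k), mul_nonneg ha0 hqc,
      mul_nonneg (by linarith : (0:ℝ) ≤ 2 * b k - 5/4) hqk]
  have hchain : ∀ k, k ≤ n → (5/4:ℝ)^k * q 0 ≤ q k := by
    intro k
    induction k with
    | zero => intro _; simp
    | succ k ih =>
      intro h
      have h1 := ih (by omega)
      have h2 := hgrow k (by omega)
      have h3 : (0:ℝ) < (5/4:ℝ)^k := by positivity
      calc (5/4:ℝ)^(k+1) * q 0 = 5/4 * ((5/4:ℝ)^k * q 0) := by ring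
        _ ≤ 5/4 * q k := by linarith
        _ ≤ q (k+1) := h2
  -- n ≥ 1
  have hc1le1 : c1 ≤ 1 := by linarith [hνnn 1]
  have hlog54 : 0 < Real.log (5/4) := Real.log_pos (by norm_num)
  have hLnn : 0 ≤ Real.log (1/c1) := Real.log_nonneg (by rw [le_div_iff₀ hc1pos]; linarith)
  have hfloor0 : (0:ℤ) ≤ ⌊Real.log (1/c1) / Real.log (5/4)⌋ :=
    Int.floor_nonneg.2 (div_nonneg hLnn hlog54.le)
  have hn1 : 1 ≤ n := by
    by_contra h
    have : n = 0 := by omega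
    omega
  -- base values
  have hb0eq : b 0 = p * ν 1 := by
    show mix ν p 1 = p * ν 1
    simp [mix]
  have ha0eq : a 0 = 1 - p := by
    show mix ν p 0 = 1 - p
    simp [mix, hν0]
  have hb0 : 2/3 < b 0 := hbj 0 (by omega)
  have hplarge : 2/3 < p := by
    rw [hb0eq] at hb0
    nlinarith [hνnn 1]
  have hq0 : q 0 = p * c1 := by
    simp only [hqdef, ha0eq, hb0eq, hc1']
    ring
  -- power bound
  have hpow : 1/c1 < (5/4:ℝ)^n := by
    have hfl := Int.lt_floor_add_one (Real.log (1/c1) / Real.log (5/4))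
    have hn' : ((⌊Real.log (1/c1) / Real.log (5/4)⌋ : ℝ) + 1) ≤ (n : ℝ) := by
      exact_mod_cast hn
    have hdiv : Real.log (1/c1) / Real.log (5/4) < (n : ℝ) := by linarith
    have hlog : Real.log (1/c1) < (n : ℝ) * Real.log (5/4) := by
      rw [div_lt_iff₀ hlog54] at hdiv
      linarith
    have hlt : Real.log (1/c1) < Real.log ((5/4:ℝ)^n) := by
      rw [Real.log_pow]
      exact hlog
    exact (Real.log_lt_log_iff (by positivity) (by positivity)).1 hlt
  have hqn := hchain n le_rfl
  have hq0' : (2/3) * c1 < q 0 := by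
    rw [hq0]
    nlinarith
  have hqbig : 2/3 < q n := by
    have hmul : (1/c1) * ((2/3) * c1) < (5/4:ℝ)^n * q 0 :=
      mul_lt_mul'' hpow hq0' (by positivity) (by positivity)
    have heq : (1/c1) * ((2/3) * c1) = 2/3 := by field_simp
    linarith [heq ▸ hmul]
  have han := hnn n 0
  have haq : a n = 1 - b n - q n := by simp only [hqdef]; ring
  have hbn : 1/2 < b n := hcon
  linarith
end
end

section
/- Fix δ ∈ (0, 1/(16m)), set s := m^{1−δ}, assume c_1 := P(X_0^* ≥ 2) > 0, and let i, M be integers with n_2 ≤ i ≤ M − 2. Suppose s_i > 0 satisfies E( ((m−1)·X_i^{(M)} − 1)·s_i^{X_i^{(M)}} ) = 0 and that s_i ≥ m − m·δ^3. Then [ H_i^{(M)}(s) − (m−1)·s·H_i^{(M)′}(s) ]^2 ≤ 2 · H_i^{(M)}(0) · Δ_i^{(M)}(s). -/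
noncomputable section

/-- The generating function `H_i^{(M)}(s) = E(s^{X_i ∧ (M - i)})` of the truncated
variable `X_i^{(M)}`, as a function of `s`. -/
def Hfn (m : ℕ) (ν : ℕ → ℝ) (p : ℝ) (i M : ℕ) : ℝ → ℝ :=
  fun s => ∑' j : ℕ, drLaw m ν p i j * s ^ (min j (M - i))

/-- `Δ_i^{(M)}(s) = [H(s) - s(s-1)H'(s)] - ((m-1)(m-s)/m)[2sH'(s) + s²H''(s)]`. -/
def DeltaFn (m : ℕ) (H : ℝ → ℝ) (s : ℝ) : ℝ :=
  (H s - s * (s - 1) * deriv H s) -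
    ((m : ℝ) - 1) * ((m : ℝ) - s) / m * (2 * s * deriv H s + s ^ 2 * deriv (deriv H) s)

/-!
Let `Q` be the law of `X_i^{(M)}`, so that `H(t) = ∑ Q_k t^k` is a polynomial. Then
`H(s) - (m-1) s H'(s)` and `Δ(s)` have coefficients `Q_k (1 - (m-1)k) s^k` and
`Q_k (1 - (m-1)k)(1 + ak) s^k` with `a = (m - s)/m`. The equation defining `s_i` says
`Q_0 = ∑_{k ≥ 1} w_k s_i^k` with `w_k = Q_k ((m-1)k - 1) ≥ 0`, so both expressions become
sums `∑ w_k (s_i^k - ⋯)`, and Cauchy–Schwarz with weights `w_k s_i^k` reduces the claim to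
`(s_i^k - s^k)^2 ≤ 2 s_i^k (s_i^k - (1 + ak) s^k)` for each `k`. This holds once
`s e^a ≤ s_i` (it amounts to `x ≤ sinh x`), and `s e^a ≤ s_i` follows from
`s_i ≥ m(1 - δ³)` because `s = m e^{-w}` with `w = δ log m`, and `e^{-w} - 1 + w ≥ w²/4`
beats `δ³`.
-/

open Finset Real

lemma exp_neg_sq_add_two_mul_exp_neg_le_one {x : ℝ} (hx : 0 ≤ x) :
    exp (-x) ^ 2 + 2 * x * exp (-x) ≤ 1 := by
  have hsinh : 2 * x ≤ exp x - exp (-x) := by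
    have := (self_le_sinh_iff (x := x)).2 hx
    rw [sinh_eq] at this
    linarith
  have hprod : exp x * exp (-x) = 1 := by rw [← exp_add, add_neg_cancel, exp_zero]
  nlinarith [exp_pos (-x)]

lemma sq_sub_le_two_mul_sub_of_mul_exp_le {S T x : ℝ} (hT : 0 ≤ T) (hx : 0 ≤ x)
    (h : T * exp x ≤ S) : (S - T) ^ 2 ≤ 2 * S * (S - (1 + x) * T) := by
  have hT' : T ≤ S * exp (-x) := by
    rwa [exp_neg, le_mul_inv_iff₀ (exp_pos x)]
  have hS : 0 ≤ S := (mul_nonneg hT (exp_pos x).le).trans h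
  have key := exp_neg_sq_add_two_mul_exp_neg_le_one hx
  nlinarith [mul_le_mul hT' hT' hT (by positivity),
    mul_le_mul_of_nonneg_left hT' (by positivity : 0 ≤ 2 * x * S),
    mul_le_mul_of_nonneg_left key (mul_nonneg hS hS)]

lemma sq_pow_sub_pow_le {s σ a : ℝ} (hs : 0 ≤ s) (ha : 0 ≤ a) (h : s * exp a ≤ σ) (k : ℕ) :
    (σ ^ k - s ^ k) ^ 2 ≤ 2 * σ ^ k * (σ ^ k - (1 + a * k) * s ^ k) := by
  refine sq_sub_le_two_mul_sub_of_mul_exp_le (pow_nonneg hs k) (by positivity) ?_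
  rw [mul_comm a, exp_nat_mul, ← mul_pow]
  exact pow_le_pow_left₀ (by positivity) h k

lemma sq_sum_le_two_mul_sum_mul_sum {ι : Type*} (S : Finset ι) (w u v b : ι → ℝ)
    (hw : ∀ k ∈ S, 0 ≤ w k) (hu : ∀ k ∈ S, 0 < u k)
    (h : ∀ k ∈ S, (u k - v k) ^ 2 ≤ 2 * u k * (u k - b k)) :
    (∑ k ∈ S, w k * (u k - v k)) ^ 2 ≤
      2 * (∑ k ∈ S, w k * u k) * ∑ k ∈ S, w k * (u k - b k) := by
  have hb : ∀ k ∈ S, 0 ≤ u k - b k := fun k hk =>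
    nonneg_of_mul_nonneg_right ((sq_nonneg _).trans (h k hk)) (by linarith [hu k hk])
  have := sum_sq_le_sum_mul_sum_of_sq_le_mul S (r := fun k => w k * (u k - v k))
    (g := fun k => 2 * (w k * (u k - b k))) (fun k hk => mul_nonneg (hw k hk) (hu k hk).le)
    (fun k hk => by have := mul_nonneg (hw k hk) (hb k hk); positivity)
    (fun k hk => by nlinarith [mul_le_mul_of_nonneg_left (h k hk) (mul_self_nonneg (w k))])
  rwa [← mul_sum, mul_left_comm, ← mul_assoc] at this

lemma sq_sum_le_two_mul_coeff_zero_mul_sum (N : ℕ) (Q : ℕ → ℝ) (hQ : ∀ k, 0 ≤ Q k)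
    {μ s σ a : ℝ} (hμ : 1 ≤ μ) (hs : 0 < s) (ha : 0 ≤ a) (hsσ : s * exp a ≤ σ)
    (hroot : ∑ k ∈ range (N + 1), Q k * ((1 - μ * k) * σ ^ k) = 0) :
    (∑ k ∈ range (N + 1), Q k * ((1 - μ * k) * s ^ k)) ^ 2 ≤
      2 * Q 0 * ∑ k ∈ range (N + 1), Q k * ((1 - μ * k) * ((1 + a * k) * s ^ k)) := by
  have hσ : 0 < σ := (mul_pos hs (exp_pos a)).trans_le hsσ
  set w : ℕ → ℝ := fun k => Q (k + 1) * (μ * (k + 1) - 1)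
  have hw : ∀ k ∈ range N, 0 ≤ w k := fun k _ =>
    mul_nonneg (hQ _) (by nlinarith [(k.cast_nonneg : (0 : ℝ) ≤ k)])
  have split : ∀ g : ℕ → ℝ, ∑ k ∈ range (N + 1), Q k * ((1 - μ * k) * g k) =
      Q 0 * g 0 - ∑ k ∈ range N, w k * g (k + 1) := by
    intro g
    have tail : ∑ k ∈ range N, Q (k + 1) * ((1 - μ * (k + 1 : ℕ)) * g (k + 1)) =
        -∑ k ∈ range N, w k * g (k + 1) := by
      rw [← sum_neg_distrib]
      exact sum_congr rfl fun k _ => by push_cast; ring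
    rw [sum_range_succ', tail, CharP.cast_eq_zero]
    ring
  rw [split] at hroot
  rw [split, split]
  simp only [pow_zero, mul_one, CharP.cast_eq_zero, mul_zero, add_zero] at hroot ⊢
  have hQ0 : Q 0 = ∑ k ∈ range N, w k * σ ^ (k + 1) := by linarith
  have key := sq_sum_le_two_mul_sum_mul_sum (range N) w (fun k => σ ^ (k + 1))
    (fun k => s ^ (k + 1)) (fun k => (1 + a * (k + 1 : ℕ)) * s ^ (k + 1)) hw
    (fun k _ => pow_pos hσ _) (fun k _ => sq_pow_sub_pow_le hs.le ha hsσ (k + 1))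
  simp only [mul_sub, sum_sub_distrib, ← hQ0] at key
  push_cast at key ⊢
  linarith

lemma deriv_sum_mul_pow (S : Finset ℕ) (c : ℕ → ℝ) (e : ℕ → ℕ) :
    deriv (fun t => ∑ k ∈ S, c k * t ^ e k) = fun t => ∑ k ∈ S, c k * e k * t ^ (e k - 1) :=
  funext fun t => (HasDerivAt.fun_sum fun k _ =>
    ((hasDerivAt_pow (e k) t).const_mul (c k)).congr_deriv (mul_assoc _ _ _).symm).deriv

lemma sum_mul_pow_sub_deriv_sub_deriv_deriv (S : Finset ℕ) (c : ℕ → ℝ) (α β x : ℝ) :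
    ∑ k ∈ S, c k * x ^ k - α * x * deriv (fun t => ∑ k ∈ S, c k * t ^ k) x
      - β * x ^ 2 * deriv (deriv fun t => ∑ k ∈ S, c k * t ^ k) x =
      ∑ k ∈ S, c k * ((1 - α * k - β * k * (k - 1)) * x ^ k) := by
  have h1 := deriv_sum_mul_pow S c id
  have h2 := deriv_sum_mul_pow S (fun k => c k * k) (fun k => k - 1)
  simp only [id] at h1 h2
  rw [h1, h2, mul_sum, mul_sum, ← sum_sub_distrib, ← sum_sub_distrib]
  refine sum_congr rfl fun k _ => ?_
  rcases k with _ | _ | k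
  · simp
  · simp only [zero_add, pow_one, Nat.cast_one, tsub_self, pow_zero, mul_zero, sub_self, sub_zero]
    ring
  · simp only [Nat.add_sub_cancel, pow_succ]
    push_cast
    ring

lemma sum_mul_pow_sub_mul_deriv (S : Finset ℕ) (c : ℕ → ℝ) (μ x : ℝ) :
    ∑ k ∈ S, c k * x ^ k - μ * x * deriv (fun t => ∑ k ∈ S, c k * t ^ k) x =
      ∑ k ∈ S, c k * ((1 - μ * k) * x ^ k) := by
  simpa only [zero_mul, sub_zero] using sum_mul_pow_sub_deriv_sub_deriv_deriv S c μ 0 x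

lemma DeltaFn_sum_mul_pow (S : Finset ℕ) (c : ℕ → ℝ) {m : ℕ} (hm : m ≠ 0) (x : ℝ) :
    DeltaFn m (fun t => ∑ k ∈ S, c k * t ^ k) x =
      ∑ k ∈ S, c k * ((1 - ((m : ℝ) - 1) * k) * ((1 + (m - x) / m * k) * x ^ k)) := by
  have := sum_mul_pow_sub_deriv_sub_deriv_deriv S c
    (x - 1 + 2 * ((m - 1) * (m - x) / m)) ((m - 1) * (m - x) / m) x
  refine Eq.trans ?_ (this.trans (sum_congr rfl fun k _ => ?_))
  · rw [DeltaFn]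
    ring
  · field_simp
    ring

def truncLaw (q : ℕ → ℝ) (N k : ℕ) : ℝ :=
  ∑' j, if min j N = k then q j else 0

lemma truncLaw_nonneg {q : ℕ → ℝ} (hq : ∀ j, 0 ≤ q j) (N k : ℕ) : 0 ≤ truncLaw q N k :=
  tsum_nonneg fun j => by split_ifs <;> simp [hq j]

lemma tsum_mul_min_eq_sum_truncLaw {q : ℕ → ℝ} (hq : Summable q) (N : ℕ) (φ : ℕ → ℝ) :
    ∑' j, q j * φ (min j N) = ∑ k ∈ range (N + 1), truncLaw q N k * φ k := by
  have hfiber : ∀ k, Summable fun j => if min j N = k then q j else 0 := fun k =>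
    (hq.indicator {j | min j N = k}).congr fun j => by simp [Set.indicator_apply]
  calc ∑' j, q j * φ (min j N)
      = ∑' j, ∑ k ∈ range (N + 1), (if min j N = k then q j else 0) * φ k := by
        refine tsum_congr fun j => ?_
        simp [ite_mul, Nat.lt_succ_of_le (min_le_right j N)]
    _ = ∑ k ∈ range (N + 1), truncLaw q N k * φ k := by
        rw [Summable.tsum_finsetSum fun k _ => (hfiber k).mul_right _]
        exact sum_congr rfl fun k _ => tsum_mul_right

lemma summable_prod_comp_pi {m : ℕ} {μ : ℕ → ℝ} (hnn : ∀ k, 0 ≤ μ k) (hs : Summable μ) :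
    Summable fun x : Fin m → ℕ => ∏ i, μ (x i) := by
  refine summable_of_sum_le (c := (∑' k, μ k) ^ m) (fun x => prod_nonneg fun i _ => hnn _)
    fun u => ?_
  set n := u.sup fun x => univ.sup x
  have hsub : u ⊆ Fintype.piFinset fun _ => range (n + 1) := fun x hx =>
    Fintype.mem_piFinset.2 fun i => mem_range.2 <| Nat.lt_succ_of_le <|
      (le_sup (f := x) (mem_univ i)).trans (le_sup (f := fun x => univ.sup x) hx)
  calc ∑ x ∈ u, ∏ i, μ (x i)
      ≤ ∑ x ∈ Fintype.piFinset fun _ => range (n + 1), ∏ i, μ (x i) :=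
        sum_le_sum_of_subset_of_nonneg hsub fun x _ _ => prod_nonneg fun i _ => hnn _
    _ = (∑ k ∈ range (n + 1), μ k) ^ m := by
        rw [← prod_univ_sum, prod_const, card_univ, Fintype.card_fin]
    _ ≤ (∑' k, μ k) ^ m :=
        pow_le_pow_left₀ (sum_nonneg fun k _ => hnn k) (hs.sum_le_tsum _ fun k _ => hnn k) m

lemma drStep_nonneg {m : ℕ} {μ : ℕ → ℝ} (hnn : ∀ k, 0 ≤ μ k) (j : ℕ) : 0 ≤ drStep m μ j :=
  tsum_nonneg fun x => by split_ifs <;> simp [prod_nonneg, hnn]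

lemma summable_drStep {m : ℕ} {μ : ℕ → ℝ} (hnn : ∀ k, 0 ≤ μ k) (hs : Summable μ) :
    Summable (drStep m μ) := by
  refine ((summable_prod_comp_pi hnn hs).hasSum.tsum_fiberwise
    fun x : Fin m → ℕ => (∑ i, x i) - 1).summable.congr fun j => ?_
  rw [_root_.tsum_subtype _ fun x : Fin m → ℕ => ∏ i, μ (x i)]
  exact tsum_congr fun x => by simp only [Set.indicator, Set.mem_preimage, Set.mem_singleton_iff]

lemma drLaw_nonneg_and_summable (m : ℕ) {ν : ℕ → ℝ} (hνnn : ∀ k, 0 ≤ ν k) (hνs : Summable ν)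
    {p : ℝ} (hp0 : 0 ≤ p) (hp1 : p ≤ 1) (n : ℕ) :
    (∀ j, 0 ≤ drLaw m ν p n j) ∧ Summable (drLaw m ν p n) := by
  induction n with
  | zero =>
    refine ⟨fun j => ?_, ?_⟩
    · have := hνnn j
      simp only [drLaw, Function.iterate_zero, id, mix]
      split_ifs <;> nlinarith
    · refine ((summable_of_ne_finset_zero (s := {0}) fun j hj => ?_).mul_left (1 - p)).add
        (hνs.mul_left p)
      simp_all
  | succ n ih =>
    rw [drLaw, Function.iterate_succ_apply']
    exact ⟨drStep_nonneg ih.1, summable_drStep ih.1 ih.2⟩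

lemma sq_div_four_le_exp_neg_sub_one_add {w : ℝ} (hw : w ≤ 2) :
    w ^ 2 / 4 ≤ exp (-w) - 1 + w := by
  have h := add_one_le_exp (-w / 2)
  have hsq : exp (-w) = exp (-w / 2) ^ 2 := by rw [← exp_nat_mul]; ring_nf
  nlinarith

lemma exp_neg_le_one_sub_cube {δ g : ℝ} (hδ0 : 0 ≤ δ) (hδ : δ ≤ 1 / 32) (hg1 : g ≤ 1)
    (hg : δ ^ 2 / 16 ≤ g) : exp (-g) ≤ 1 - δ ^ 3 := by
  have h1 : 1 ≤ (1 + g) * (1 - δ ^ 3) := by nlinarith [pow_nonneg hδ0 3]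
  have h2 : exp (-g) * exp g = 1 := by rw [← exp_add, neg_add_cancel, exp_zero]
  nlinarith [add_one_le_exp g, exp_pos (-g)]

lemma rpow_one_sub_mul_exp_le {m : ℕ} (hm : 2 ≤ m) {δ σ : ℝ}
    (hδ : δ ∈ Set.Ioo (0 : ℝ) (1 / (16 * m))) (hσ : (m : ℝ) - m * δ ^ 3 ≤ σ) :
    (m : ℝ) ^ (1 - δ) * exp ((m - (m : ℝ) ^ (1 - δ)) / m) ≤ σ := by
  obtain ⟨hδ0, hδ1⟩ := hδ
  have hm2 : (2 : ℝ) ≤ m := by exact_mod_cast hm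
  have hδm : δ * m ≤ 1 / 16 := by
    rw [lt_div_iff₀ (by positivity)] at hδ1; linarith
  have hL : 1 / 2 ≤ log m := le_trans (by linarith [log_two_gt_d9]) (log_le_log two_pos hm2)
  have hLm : log m ≤ m := (log_le_sub_one_of_pos (by linarith)).trans (by linarith)
  set w := δ * log m
  have hw0 : δ / 2 ≤ w := by nlinarith
  have hw1 : w ≤ 1 / 16 := (mul_le_mul_of_nonneg_left hLm hδ0.le).trans hδm
  have hs : (m : ℝ) ^ (1 - δ) = m * exp (-w) := by
    rw [rpow_def_of_pos (by linarith), show log m * (1 - δ) = log m + -w by ring, exp_add,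
      exp_log (by linarith)]
  set g := exp (-w) - 1 + w
  have hg : δ ^ 2 / 16 ≤ g :=
    le_trans (by nlinarith) (sq_div_four_le_exp_neg_sub_one_add (by linarith))
  have hg1 : g ≤ 1 := by linarith [exp_le_one_iff.2 (by linarith : -w ≤ 0)]
  have hexp : exp (-w) * exp ((m - m * exp (-w)) / m) = exp (-g) := by
    rw [← exp_add]; congr 1; field_simp; ring
  calc (m : ℝ) ^ (1 - δ) * exp ((m - (m : ℝ) ^ (1 - δ)) / m) = m * exp (-g) := by
        rw [hs, mul_assoc, hexp]
    _ ≤ m * (1 - δ ^ 3) := mul_le_mul_of_nonneg_left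
        (exp_neg_le_one_sub_cube hδ0.le (by nlinarith) hg1 hg) (by linarith)
    _ ≤ σ := by linarith

theorem cauchy_schwarz_Delta_general
    (m : ℕ) (hm : 2 ≤ m) (ν : ℕ → ℝ)
    (hνnn : ∀ k, 0 ≤ ν k) (hνsum : ∑' k, ν k = 1)
    (δ : ℝ) (hδ : δ ∈ Set.Ioo (0 : ℝ) (1 / (16 * m)))
    (s : ℝ) (hs : s = (m : ℝ) ^ ((1 : ℝ) - δ))
    (p : ℝ) (hp : p ∈ Set.Ioo (0 : ℝ) 1)
    (i M : ℕ)
    (si : ℝ)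
    (hsiroot : (∑' j : ℕ, (((m : ℝ) - 1) * ((min j (M - i) : ℕ) : ℝ) - 1) *
        si ^ (min j (M - i)) * drLaw m ν p i j) = 0)
    (hsi : (m : ℝ) - m * δ ^ 3 ≤ si) :
    (Hfn m ν p i M s - ((m : ℝ) - 1) * s * deriv (Hfn m ν p i M) s) ^ 2 ≤
      2 * Hfn m ν p i M 0 * DeltaFn m (Hfn m ν p i M) s := by
  have hνs : Summable ν := by
    by_contra h
    simp [tsum_eq_zero_of_not_summable h] at hνsum
  obtain ⟨hq0, hq⟩ := drLaw_nonneg_and_summable m hνnn hνs hp.1.le hp.2.le i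
  set Q := truncLaw (drLaw m ν p i) (M - i)
  have hH : Hfn m ν p i M = fun t => ∑ k ∈ range (M - i + 1), Q k * t ^ k :=
    funext fun t => tsum_mul_min_eq_sum_truncLaw hq (M - i) _
  have hroot : ∑ k ∈ range (M - i + 1), Q k * ((1 - ((m : ℝ) - 1) * k) * si ^ k) = 0 := by
    rw [← tsum_mul_min_eq_sum_truncLaw hq, ← neg_eq_zero, ← tsum_neg, ← hsiroot]
    exact tsum_congr fun j => by ring
  have hm2 : (2 : ℝ) ≤ m := by exact_mod_cast hm
  have hs0 : 0 < s := hs ▸ rpow_pos_of_pos (by linarith) _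
  have hsm : s ≤ m := hs ▸ (rpow_le_rpow_of_exponent_le (by linarith) (by linarith [hδ.1])).trans
    (rpow_one _).le
  have hsσ : s * exp ((m - s) / m) ≤ si := hs ▸ rpow_one_sub_mul_exp_le hm hδ hsi
  have hH0 : Hfn m ν p i M 0 = Q 0 := by simp [hH, sum_range_succ']
  rw [hH0, hH, DeltaFn_sum_mul_pow _ _ (by omega)]
  beta_reduce
  rw [sum_mul_pow_sub_mul_deriv]
  exact sq_sum_le_two_mul_coeff_zero_mul_sum (M - i) Q (truncLaw_nonneg hq0 _) (by linarith) hs0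
    (div_nonneg (by linarith) (by linarith)) hsσ hroot

/-- Lemma 4.6, first inequality. Fix `δ ∈ (0, 1/(16m))` and
`s = m^{1-δ}`. Let `n_2 ≤ i ≤ M - 2` and let `s_i > 0` satisfy
`E(((m-1)X_i^{(M)} - 1)s_i^{X_i^{(M)}}) = 0`. If `s_i ≥ m - mδ³`, then
`[H_i^{(M)}(s) - (m-1)s H_i^{(M)'}(s)]² ≤ 2 H_i^{(M)}(0) Δ_i^{(M)}(s)`. -/
theorem cauchy_schwarz_Delta
    (m : ℕ) (hm : 2 ≤ m) (ν : ℕ → ℝ)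
    (hν0 : ν 0 = 0) (hνnn : ∀ k, 0 ≤ ν k) (hνsum : ∑' k, ν k = 1)
    (δ : ℝ) (hδ : δ ∈ Set.Ioo (0 : ℝ) (1 / (16 * m)))
    (s : ℝ) (hs : s = (m : ℝ) ^ ((1 : ℝ) - δ))
    (c1 : ℝ) (hc1 : c1 = ∑' j : ℕ, ν (j + 2)) (hc1pos : 0 < c1)
    (n2 : ℕ) (hn2 : (n2 : ℤ) = ⌊Real.log (1 / c1) / Real.log (5 / 4)⌋ + 1)
    (p : ℝ) (hp : p ∈ Set.Ioo (0 : ℝ) 1)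
    (i M : ℕ) (hi : n2 ≤ i) (hiM : i + 2 ≤ M)
    (si : ℝ) (hsipos : 0 < si)
    (hsiroot : (∑' j : ℕ, (((m : ℝ) - 1) * ((min j (M - i) : ℕ) : ℝ) - 1) *
        si ^ (min j (M - i)) * drLaw m ν p i j) = 0)
    (hsi : (m : ℝ) - m * δ ^ 3 ≤ si) :
    (Hfn m ν p i M s - ((m : ℝ) - 1) * s * deriv (Hfn m ν p i M) s) ^ 2 ≤
      2 * Hfn m ν p i M 0 * DeltaFn m (Hfn m ν p i M) s :=
  cauchy_schwarz_Delta_general m hm ν hνnn hνsum δ hδ s hs p hp i M si hsiroot hsi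
end
end
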